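/- arXiv:0706.1800 — 3 statements merged into one kernel-verified Lean document; each statement's English description precedes it below -/
import Mathlib

section
/- Let A be any skew shape and let k ≥ 2 be an integer. Then rows_{k−1}(trim(A)) = rows_k(A), where trim(A) is the skew shape obtained from A by deleting the top box of every non-empty column of A. -/
open Finset

/-- The weakly decreasing rearrangement of a finite sequence (list) of natural numbers,
i.e. the partition obtained by sorting its parts into weakly decreasing order. -/
def sortDesc (l : List ℕ) : List ℕ := l.mergeSort (fun a b => b ≤ a)

/-- The (extended) dominance order on partitions, represented as weakly decreasing lists
of natural numbers (parts beyond the length of the list are taken to be `0`):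
`Dom a b` means `a ⊴ b`, i.e. `a₁ + ⋯ + a_k ≤ b₁ + ⋯ + b_k` for all `k`. -/
def Dom (a b : List ℕ) : Prop := ∀ k : ℕ, (a.take k).sum ≤ (b.take k).sum

/-- The conjugate (transpose) of a partition given as a list of natural numbers:
the `j`-th entry (0-indexed) is the number of parts that are `> j`. -/
def conj (l : List ℕ) : List ℕ :=
  (List.range (l.foldr max 0)).map (fun j => (l.filter (fun x => j < x)).length)

/-- A skew shape `λ/μ`: a pair of Young diagrams `μ ⊆ λ`. -/
structure SkewShape where
  outer : YoungDiagram
  inner : YoungDiagram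
  le : inner ≤ outer

namespace SkewShape

/-- The cells (boxes) of a skew shape: boxes of the outer diagram not in the inner one. -/
def cells (A : SkewShape) : Finset (ℕ × ℕ) := A.outer.cells \ A.inner.cells

/-- The number of rows of (the outer shape of) a skew shape. -/
def numRows (A : SkewShape) : ℕ := A.outer.colLen 0

/-- The number of columns of (the outer shape of) a skew shape. -/
def numCols (A : SkewShape) : ℕ := A.outer.rowLen 0

/-- `A.overlap k i` is the number of columns occupied in common by the `k` consecutive
rows `i, i+1, …, i+k-1` of the skew shape `A` (rows indexed from 0). -/
def overlap (A : SkewShape) (k i : ℕ) : ℕ :=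
  ((Finset.range A.numCols).filter (fun j => ∀ t, t < k → (i + t, j) ∈ A.cells)).card

/-- `rows_k(A)`: the weakly decreasing rearrangement of the row-overlap numbers
`(overlap k 0, overlap k 1, …)`; zero parts are discarded (a partition is identified
with its zero-padded versions).  `A.rowsK 1` is the partition of row lengths of `A`. -/
def rowsK (A : SkewShape) (k : ℕ) : List ℕ :=
  sortDesc (((List.range (A.numRows + 1 - k)).map (A.overlap k)).filter (fun x => 0 < x))

/-- The transpose (conjugate) of a skew shape. -/
def transpose (A : SkewShape) : SkewShape :=
  ⟨A.outer.transpose, A.inner.transpose, YoungDiagram.transpose_mono A.le⟩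

/-- `cols_l(A)`: the weakly decreasing rearrangement of the column-overlap numbers of `A`;
`A.colsK 1` is the partition of column lengths of `A`. -/
def colsK (A : SkewShape) (l : ℕ) : List ℕ := A.transpose.rowsK l

/-- `rects k l A` is the number of `k × l` rectangular subdiagrams (contiguous `k × l`
blocks of boxes) contained inside the skew shape `A`, recorded by the position of
their top-left corner. -/
def rects (A : SkewShape) (k l : ℕ) : ℕ :=
  (((Finset.range A.numRows) ×ˢ (Finset.range A.numCols)).filter
    (fun p => ∀ t, t < k → ∀ u, u < l → (p.1 + t, p.2 + u) ∈ A.cells)).card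

end SkewShape

/-- A semistandard Young tableau of skew shape `A`: a filling of the boxes of `A`
with positive integers, weakly increasing along rows and strictly increasing down
columns (entries outside `A` are recorded as `0`). -/
structure SkewSsyt (A : SkewShape) where
  entry : ℕ → ℕ → ℕ
  pos : ∀ i j, (i, j) ∈ A.cells → 1 ≤ entry i j
  zeros : ∀ i j, (i, j) ∉ A.cells → entry i j = 0
  row_weak : ∀ i j1 j2, j1 ≤ j2 → (i, j1) ∈ A.cells → (i, j2) ∈ A.cells →
      entry i j1 ≤ entry i j2
  col_strict : ∀ i1 i2 j, i1 < i2 → (i1, j) ∈ A.cells → (i2, j) ∈ A.cells →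
      entry i1 j < entry i2 j

/-- The number of boxes of `T` filled with the entry `v`. -/
def contentCount {A : SkewShape} (T : SkewSsyt A) (v : ℕ) : ℕ :=
  (A.cells.filter (fun c => T.entry c.1 c.2 = v)).card

/-- `T` has content `ν` (a partition written as a list, 0-indexed: `ν.getD v 0` is the
`(v+1)`-st part): the number of entries equal to `v + 1` is the `(v+1)`-st part of `ν`. -/
def HasContent {A : SkewShape} (T : SkewSsyt A) (ν : List ℕ) : Prop :=
  ∀ v : ℕ, contentCount T (v + 1) = ν.getD v 0

/-- `readBefore c c'` : the box `c` comes strictly before the box `c'` in the reverse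
reading order (rows top to bottom, each row read right to left). -/
def readBefore (c c' : ℕ × ℕ) : Prop := c.1 < c'.1 ∨ (c.1 = c'.1 ∧ c'.2 < c.2)

instance (c c' : ℕ × ℕ) : Decidable (readBefore c c') := by
  unfold readBefore; infer_instance

/-- `T` is a Littlewood–Richardson filling: its reverse reading word is a lattice word,
i.e. at every box `c` carrying an entry `v + 2`, the number of occurrences of `v + 2`
read so far (weakly up to `c`) is at most the number of occurrences of `v + 1` read
strictly before `c`. -/
def IsLR {A : SkewShape} (T : SkewSsyt A) : Prop :=
  ∀ c ∈ A.cells, ∀ v : ℕ, T.entry c.1 c.2 = v + 2 →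
    (A.cells.filter (fun c' => T.entry c'.1 c'.2 = v + 2 ∧ (readBefore c' c ∨ c' = c))).card ≤
    (A.cells.filter (fun c' => T.entry c'.1 c'.2 = v + 1 ∧ readBefore c' c)).card

/-- The support of the skew Schur function `s_A`: by the Littlewood–Richardson rule,
the set of partitions `ν` (weakly decreasing lists) admitting an LR filling of `A`
of content `ν`, i.e. those `ν` with `s_ν` appearing with nonzero coefficient in `s_A`. -/
def SkewShape.support (A : SkewShape) : Set (List ℕ) :=
  { ν | ν.Pairwise (· ≥ ·) ∧ ∃ T : SkewSsyt A, IsLR T ∧ HasContent T ν }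

/-- The coefficient of the Schur function `s_ν` in the Schur expansion of `s_A`:
by the Littlewood–Richardson rule, the number of LR fillings of `A` of content `ν`. -/
noncomputable def lrCoeff (A : SkewShape) (ν : List ℕ) : ℕ :=
  Nat.card { T : SkewSsyt A // IsLR T ∧ HasContent T ν }

/-- `s_A − s_B` is Schur-positive: every coefficient in the Schur expansion of the
difference is nonnegative, i.e. (by the LR rule) each LR coefficient of `B` is at most
the corresponding one of `A`. -/
def SchurPositiveDiff (A B : SkewShape) : Prop :=
  ∀ ν : List ℕ, ν.Pairwise (· ≥ ·) → lrCoeff B ν ≤ lrCoeff A ν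

/-- The skew Schur function `s_A = Σ_T x^T`, as a formal power series in the variables
`x_0, x_1, x_2, …` (variable `x_v` recording entries equal to `v + 1`): the coefficient
of the monomial with exponents `d` is the number of SSYT of shape `A` and content `d`. -/
noncomputable def skewSchur (A : SkewShape) : MvPowerSeries ℕ ℤ :=
  fun d => (Nat.card { T : SkewSsyt A // ∀ v : ℕ, contentCount T (v + 1) = d v } : ℤ)

/-- The boxes remaining after deleting the top box of every non-empty column of `A`:
a box survives iff there is a box of `A` directly above it. -/
def trimCells (A : SkewShape) : Finset (ℕ × ℕ) :=
  A.cells.filter (fun c => 1 ≤ c.1 ∧ (c.1 - 1, c.2) ∈ A.cells)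

/-- The set of boxes of the skew shape `A ∗ B`, obtained by positioning `B` immediately
below and to the left of `A` so that `A` and `B` share no common row or column. -/
def starCells (A B : SkewShape) : Finset (ℕ × ℕ) :=
  A.cells.image (fun c => (c.1, c.2 + B.numCols)) ∪
    B.cells.image (fun c => (c.1 + A.numRows, c.2))

/-- The straight shape (partition) `μ`, viewed as the skew shape `μ/(0)`. -/
def ofYD (μ : YoungDiagram) : SkewShape := ⟨μ, ⊥, bot_le⟩

/-- The list of parts `(μ_k, μ_{k+1}, …, μ_l)` (1-indexed) of a partition `μ` given as a
Young diagram, parts beyond the length of `μ` being `0`. -/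
def tailParts (μ : YoungDiagram) (k l : ℕ) : List ℕ :=
  (List.range (l + 1 - k)).map (fun t => μ.rowLen (k - 1 + t))

/-! Row `i + 1` of `trim(A)` consists of the boxes of row `i + 1` of `A` lying below a box of row
`i`, so `k - 1` consecutive rows of `trim(A)` starting at row `i + 1` share exactly the columns
shared by the `k` rows of `A` starting at row `i`. Row `0` of `trim(A)` is empty, so the
overlap sequences of `trim(A)` and of `A` differ only by a leading zero, which `rowsK` discards. -/

theorem Nat.forall_lt_succ_iff_forall_lt_and_succ {p : ℕ → Prop} {k : ℕ} (hk : 0 < k) :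
    (∀ t < k + 1, p t) ↔ ∀ t < k, p t ∧ p (t + 1) := by
  refine ⟨fun h t ht => ⟨h t (by omega), h (t + 1) (by omega)⟩, fun h t ht => ?_⟩
  rcases t with _ | t
  · exact (h 0 hk).1
  · exact (h t (by omega)).2

theorem List.filter_pos_map_range_of_le {f : ℕ → ℕ} {n m : ℕ} (hnm : n ≤ m)
    (hf : ∀ i, n ≤ i → f i = 0) :
    ((List.range m).map f).filter (0 < ·) = ((List.range n).map f).filter (0 < ·) := by
  obtain ⟨d, rfl⟩ := Nat.exists_eq_add_of_le hnm
  have htail : (((List.range d).map (n + ·)).map f).filter (0 < ·) = [] := by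
    simp [hf _ (Nat.le_add_right n _)]
  rw [List.range_add, List.map_append, List.filter_append, htail, List.append_nil]

theorem List.filter_pos_map_range_succ {g : ℕ → ℕ} (hg : g 0 = 0) (n : ℕ) :
    ((List.range (n + 1)).map g).filter (0 < ·) =
      ((List.range n).map (fun i => g (i + 1))).filter (0 < ·) := by
  rw [List.range_succ_eq_map, List.map_cons, List.map_map, List.filter_cons_of_neg (by simp [hg])]
  rfl

theorem not_zero_mem_trimCells (A : SkewShape) (j : ℕ) : (0, j) ∉ trimCells A := by
  simp [trimCells]

theorem succ_mem_trimCells_iff (A : SkewShape) (i j : ℕ) :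
    (i + 1, j) ∈ trimCells A ↔ (i + 1, j) ∈ A.cells ∧ (i, j) ∈ A.cells := by
  simp [trimCells]

namespace SkewShape

theorem lt_numRows_of_mem_cells (A : SkewShape) {i j : ℕ} (h : (i, j) ∈ A.cells) :
    i < A.numRows := by
  have hij : (i, j) ∈ A.outer := (YoungDiagram.mem_cells _).mp (Finset.mem_sdiff.mp h).1
  exact (YoungDiagram.mem_iff_lt_colLen.mp hij).trans_le (A.outer.colLen_anti 0 j j.zero_le)

theorem lt_numCols_of_mem_cells (A : SkewShape) {i j : ℕ} (h : (i, j) ∈ A.cells) :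
    j < A.numCols := by
  have hij : (i, j) ∈ A.outer := (YoungDiagram.mem_cells _).mp (Finset.mem_sdiff.mp h).1
  exact (YoungDiagram.mem_iff_lt_rowLen.mp hij).trans_le (A.outer.rowLen_anti 0 i i.zero_le)

theorem overlap_eq_zero_of_numRows_lt (A : SkewShape) {k i : ℕ} (hk : 0 < k)
    (h : A.numRows < i + k) : A.overlap k i = 0 := by
  rw [overlap, Finset.card_eq_zero, Finset.filter_eq_empty_iff]
  intro j _ hrows
  have := A.lt_numRows_of_mem_cells (hrows (k - 1) (by omega))
  omega

theorem overlap_eq_overlap {A B : SkewShape} {k l i i' : ℕ} (hk : 0 < k) (hl : 0 < l)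
    (h : ∀ j, (∀ t < k, (i + t, j) ∈ A.cells) ↔ (∀ t < l, (i' + t, j) ∈ B.cells)) :
    A.overlap k i = B.overlap l i' := by
  unfold overlap
  congr 1
  ext j
  simp only [Finset.mem_filter, Finset.mem_range]
  refine ⟨fun ⟨_, hA⟩ => ⟨?_, (h j).mp hA⟩, fun ⟨_, hB⟩ => ⟨?_, (h j).mpr hB⟩⟩
  · exact B.lt_numCols_of_mem_cells ((h j).mp hA 0 hl)
  · exact A.lt_numCols_of_mem_cells ((h j).mpr hB 0 hk)

theorem overlap_zero_of_cells_eq_trimCells {A T : SkewShape} (hT : T.cells = trimCells A)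
    {k : ℕ} (hk : 0 < k) : T.overlap k 0 = 0 := by
  rw [overlap, Finset.card_eq_zero, Finset.filter_eq_empty_iff]
  intro j _ hrows
  exact not_zero_mem_trimCells A j (by simpa [hT] using hrows 0 hk)

theorem overlap_succ_of_cells_eq_trimCells {A T : SkewShape} (hT : T.cells = trimCells A)
    {k : ℕ} (hk : 0 < k) (i : ℕ) : T.overlap k (i + 1) = A.overlap (k + 1) i := by
  refine overlap_eq_overlap hk k.succ_pos fun j => ?_
  rw [Nat.forall_lt_succ_iff_forall_lt_and_succ hk]
  refine forall₂_congr fun t _ => ?_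
  rw [hT, show i + 1 + t = i + t + 1 by omega, succ_mem_trimCells_iff, and_comm]
  rfl

end SkewShape

/-- Lemma `lem:trim`.
Let `A` be any skew shape and let `k ≥ 2` be an integer.  Then
`rows_{k−1}(trim(A)) = rows_k(A)`, where `trim(A)` is the skew shape obtained from `A`
by deleting the top box of every non-empty column of `A` (here `T` is any skew shape
whose set of boxes is that of `trim(A)`). -/
theorem rowsK_trim (A T : SkewShape) (hT : T.cells = trimCells A) (k : ℕ) (hk : 2 ≤ k) :
    T.rowsK (k - 1) = A.rowsK k := by
  obtain ⟨m, rfl⟩ : ∃ m, k = m + 1 + 1 := ⟨k - 2, by omega⟩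
  have hm : 0 < m + 1 := m.succ_pos
  set N := A.numRows + T.numRows
  have hT_pad := List.filter_pos_map_range_of_le (f := T.overlap (m + 1))
    (show T.numRows + 1 - (m + 1) ≤ N + 1 by omega)
    fun i hi => T.overlap_eq_zero_of_numRows_lt hm (by omega)
  have hA_pad := List.filter_pos_map_range_of_le (f := A.overlap (m + 1 + 1))
    (show A.numRows + 1 - (m + 1 + 1) ≤ N by omega)
    fun i hi => A.overlap_eq_zero_of_numRows_lt (by omega) (by omega)
  unfold SkewShape.rowsK
  rw [Nat.add_sub_cancel, ← hT_pad, ← hA_pad,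
    List.filter_pos_map_range_succ (SkewShape.overlap_zero_of_cells_eq_trimCells hT hm)]
  simp only [SkewShape.overlap_succ_of_cells_eq_trimCells hT hm]
end

section
/- Let A and B be skew shapes. If supp(A) ⊇ supp(B), i.e., every partition appearing in the Schur expansion of s_B also appears in the Schur expansion of s_A, then rows_k(A) ⊴ rows_k(B) in the dominance order for all k ≥ 1. -/
open Finset

/-!
Fix `k ≥ 1` and `m`. Let `T` be any Littlewood–Richardson filling of `A`, with content `ν`, and
take `m` windows of `k` consecutive rows of `A`. In the bottom row of a window, the cells lying in
the columns common to the window carry entries `≥ k` by column strictness. For the `s`-th window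
(in increasing order) count those with entries `≤ k + s` directly; by the lattice property, those
with entries `> k + s` are outnumbered by the entries `k + s` strictly above that row. The cells
counted for distinct windows are distinct, so the `m` largest parts of `rows_k(A)` sum to at most
`ν_k + ⋯ + ν_{k+m-1}`.

Conversely, `B` carries an explicit Littlewood–Richardson filling in which the `q`-th cell from the
right in the bottom row of a window receives `k` plus the number of earlier windows with overlap
`≥ q`; its entries in `[k, k + m)` number at most `Σ_q min(m, #{windows with overlap ≥ q})`, which
is the sum of the `m` largest parts of `rows_k(B)`. The content of this filling lies in
`supp(B) ⊆ supp(A)`, so `A` has a Littlewood–Richardson filling with the same content, and the two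
bounds combine.
-/

theorem YoungDiagram.colLen_le_iff_rowLen_le (μ : YoungDiagram) {i j : ℕ} :
    μ.colLen j ≤ i ↔ μ.rowLen i ≤ j := by
  rw [← not_lt, ← not_lt, ← YoungDiagram.mem_iff_lt_colLen, ← YoungDiagram.mem_iff_lt_rowLen]

theorem Finset.card_filter_eq_add_of_iff {α : Type*} {s : Finset α} {p q r : α → Prop}
    [DecidablePred p] [DecidablePred q] [DecidablePred r] (hqr : ∀ x ∈ s, q x → ¬ r x)
    (h : ∀ x ∈ s, p x ↔ q x ∨ r x) :
    #{x ∈ s | p x} = #{x ∈ s | q x} + #{x ∈ s | r x} := by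
  classical
  rw [filter_congr h, filter_or, card_union_of_disjoint (disjoint_filter.2 hqr)]

theorem Nat.count_mem_lt_card {S : Finset ℕ} {a : ℕ} (ha : a ∈ S) :
    Nat.count (· ∈ S) a < #S := by
  rw [Nat.count_eq_card_filter_range]
  refine card_lt_card ((ssubset_iff_of_subset fun x hx => (mem_filter.1 hx).2).2 ⟨a, ha, ?_⟩)
  simp

theorem Nat.nth_lt_and_mem_and_count_nth {p : ℕ → Prop} [DecidablePred p] {n w : ℕ}
    (h : n < Nat.count p w) :
    Nat.nth p n < w ∧ p (Nat.nth p n) ∧ Nat.count p (Nat.nth p n) = n := by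
  have hn : ∀ hf : (Set.ofPred p).Finite, n < #hf.toFinset :=
    fun hf => h.trans_le (Nat.count_le_card hf w)
  exact ⟨Nat.nth_lt_of_lt_count h, Nat.nth_mem n hn, Nat.count_nth hn⟩

theorem Nat.card_filter_count_lt_le (p : ℕ → Prop) [DecidablePred p] (N m : ℕ) :
    #{w ∈ range N | p w ∧ Nat.count p w < m} ≤ min m (Nat.count p N) := by
  refine le_min ?_ ?_
  · calc #{w ∈ range N | p w ∧ Nat.count p w < m}
        ≤ #(range m) := card_le_card_of_injOn (Nat.count p)
          (fun w hw => mem_range.2 (mem_filter.1 hw).2.2)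
          (fun a ha b hb => Nat.count_injective (mem_filter.1 ha).2.1 (mem_filter.1 hb).2.1)
      _ = m := card_range m
  · rw [Nat.count_eq_card_filter_range]
    exact card_le_card (monotone_filter_right _ fun _ _ h => h.1)

theorem List.Subperm.exists_finset_sum_eq {α M : Type*} [DecidableEq α] [AddCommMonoid M]
    {l : List M} {L : List α} {f : α → M} (hL : L.Nodup) (h : l.Subperm (L.map f)) :
    ∃ S : Finset α, #S = l.length ∧ l.sum = ∑ a ∈ S, f a := by
  obtain ⟨l', hperm, hsub⟩ := h
  obtain ⟨r, hr, rfl⟩ := List.sublist_map_iff.1 hsub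
  refine ⟨r.toFinset, ?_, ?_⟩
  · rw [List.toFinset_card_of_nodup (hL.sublist hr), ← hperm.length_eq, List.length_map]
  · rw [List.sum_toFinset _ (hL.sublist hr), hperm.sum_eq]

theorem List.sum_take_eq_sum_min_countP {s : List ℕ} (hs : s.Pairwise (· ≥ ·)) {C : ℕ}
    (hC : ∀ x ∈ s, x ≤ C) (m : ℕ) :
    (s.take m).sum = ∑ q ∈ Icc 1 C, min m (s.countP (q ≤ ·)) := by
  induction s generalizing m with
  | nil => simp
  | cons a s ih =>
    obtain ⟨ha, hs⟩ := List.pairwise_cons.1 hs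
    obtain _ | m := m
    · simp
    have hterm : ∀ q ∈ Icc 1 C, min (m + 1) ((a :: s).countP (q ≤ ·)) =
        min m (s.countP (q ≤ ·)) + if q ≤ a then 1 else 0 := fun q _ => by
      rw [List.countP_cons]
      by_cases hqa : q ≤ a
      · simp only [hqa, decide_true, if_true]
        omega
      · have : s.countP (q ≤ ·) = 0 := List.countP_eq_zero.2 fun x hx => by
          have := ha x hx
          simp only [decide_eq_true_eq]
          omega
        simp [hqa, this]
    have hsum : ∑ q ∈ Icc 1 C, (if q ≤ a then 1 else 0) = a := by
      have := hC a List.mem_cons_self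
      rw [sum_boole, Nat.cast_id, show {q ∈ Icc 1 C | q ≤ a} = Icc 1 a by ext; simp; omega]
      simp
    rw [sum_congr rfl hterm, sum_add_distrib, hsum, ← ih hs (fun x hx => hC x (by simp [hx])),
      List.take_succ_cons, List.sum_cons, add_comm]

theorem readBefore_or_eq_iff (c c' : ℕ × ℕ) :
    readBefore c' c ∨ c' = c ↔
      toLex (c'.1, OrderDual.toDual c'.2) ≤ toLex (c.1, OrderDual.toDual c.2) := by
  obtain ⟨a, b⟩ := c; obtain ⟨a', b'⟩ := c'
  simp only [readBefore, Prod.Lex.toLex_le_toLex, OrderDual.toDual_le_toDual, Prod.mk.injEq]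
  omega

theorem Finset.Nonempty.exists_readBefore_max {s : Finset (ℕ × ℕ)} (hs : s.Nonempty) :
    ∃ c ∈ s, ∀ c' ∈ s, readBefore c' c ∨ c' = c := by
  simpa only [readBefore_or_eq_iff] using
    s.exists_max_image (fun c => toLex (c.1, OrderDual.toDual c.2)) hs

namespace SkewShape

variable (A : SkewShape)

theorem mem_cells_iff_rowLen {i j : ℕ} :
    (i, j) ∈ A.cells ↔ A.inner.rowLen i ≤ j ∧ j < A.outer.rowLen i := by
  simp [cells, YoungDiagram.mem_iff_lt_rowLen, and_comm]

theorem mem_cells_iff_colLen {i j : ℕ} :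
    (i, j) ∈ A.cells ↔ A.inner.colLen j ≤ i ∧ i < A.outer.colLen j := by
  simp [cells, YoungDiagram.mem_iff_lt_colLen, and_comm]

variable {A}

theorem fst_lt_numRows {c : ℕ × ℕ} (hc : c ∈ A.cells) : c.1 < A.numRows :=
  ((A.mem_cells_iff_colLen.1 hc).2).trans_le (A.outer.colLen_anti 0 c.2 c.2.zero_le)

theorem overlap_le_numCols (k w : ℕ) : A.overlap k w ≤ A.numCols :=
  (card_filter_le _ _).trans (card_range _).le

theorem overlap_eq {k : ℕ} (hk : 1 ≤ k) (w : ℕ) :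
    A.overlap k w = A.outer.rowLen (w + k - 1) - A.inner.rowLen w := by
  rw [overlap, ← Nat.card_Ico]
  congr 1
  ext j
  simp only [mem_filter, mem_range, mem_Ico, mem_cells_iff_rowLen]
  have hlam : A.outer.rowLen (w + k - 1) ≤ A.numCols := A.outer.rowLen_anti _ _ (Nat.zero_le _)
  constructor
  · intro ⟨_, hj⟩
    refine ⟨(hj 0 hk).1, ?_⟩
    simpa [show w + (k - 1) = w + k - 1 by omega] using (hj (k - 1) (by omega)).2
  · intro ⟨hμ, hlt⟩
    refine ⟨by omega, fun t ht => ⟨(A.inner.rowLen_anti _ _ (by omega)).trans hμ, ?_⟩⟩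
    exact hlt.trans_le (A.outer.rowLen_anti _ _ (by omega))

theorem take_sum_rowsK (k m : ℕ) :
    ((A.rowsK k).take m).sum =
      ∑ q ∈ Icc 1 A.numCols, min m (Nat.count (q ≤ A.overlap k ·) (A.numRows + 1 - k)) := by
  have hperm := List.mergeSort_perm
    (((List.range (A.numRows + 1 - k)).map (A.overlap k)).filter (0 < ·)) (fun a b => b ≤ a)
  have hbound : ∀ x ∈ A.rowsK k, x ≤ A.numCols := fun x hx => by
    obtain ⟨w, -, rfl⟩ := List.mem_map.1 (List.mem_filter.1 (hperm.mem_iff.1 hx)).1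
    exact overlap_le_numCols k w
  have hsorted : (A.rowsK k).Pairwise (· ≥ ·) := List.pairwise_mergeSort' _ _
  rw [List.sum_take_eq_sum_min_countP hsorted hbound]
  refine sum_congr rfl fun q hq => ?_
  rw [rowsK, sortDesc, hperm.countP_eq, List.countP_filter, List.countP_map, Nat.count]
  congr 1
  refine List.countP_congr fun x _ => ?_
  have := (mem_Icc.1 hq).1
  simp only [Function.comp, Bool.and_eq_true, decide_eq_true_eq]
  omega

end SkewShape

namespace SkewSsyt

variable {A : SkewShape} (T : SkewSsyt A)

def countIco (a b : ℕ) : ℕ := #{c ∈ A.cells | T.entry c.1 c.2 ∈ Ico a b}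

theorem countIco_eq_sum (a b : ℕ) : T.countIco a b = ∑ v ∈ Ico a b, contentCount T v := by
  refine (card_eq_sum_card_fiberwise (f := fun c : ℕ × ℕ => T.entry c.1 c.2)
    fun c hc => (mem_filter.1 hc).2).trans ?_
  refine sum_congr rfl fun v hv => congrArg card ?_
  rw [filter_filter]
  exact filter_congr fun c _ => ⟨fun h => h.2, fun h => ⟨by simpa [h] using hv, h⟩⟩

theorem countIco_mono_right (a : ℕ) {b b' : ℕ} (h : b ≤ b') :
    T.countIco a b ≤ T.countIco a b' :=
  card_le_card <| monotone_filter_right _ fun _ _ => (Ico_subset_Ico_right h ·)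

theorem countIco_eq_of_hasContent {B : SkewShape} {T' : SkewSsyt B} {ν : List ℕ}
    (h : HasContent T ν) (h' : HasContent T' ν) {a : ℕ} (ha : 1 ≤ a) (b : ℕ) :
    T.countIco a b = T'.countIco a b := by
  rw [countIco_eq_sum, countIco_eq_sum]
  refine sum_congr rfl fun v hv => ?_
  obtain ⟨u, rfl⟩ : ∃ u, v = u + 1 := ⟨v - 1, by have := (mem_Ico.1 hv).1; omega⟩
  rw [h u, h' u]

theorem le_entry_of_forall_mem {a j n : ℕ} (h : ∀ t ≤ n, (a + t, j) ∈ A.cells) :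
    n + 1 ≤ T.entry (a + n) j := by
  induction n with
  | zero => exact T.pos _ _ (h 0 le_rfl)
  | succ n ih =>
    have := T.col_strict (a + n) (a + (n + 1)) j (by omega) (h n (by omega)) (h (n + 1) le_rfl)
    have := ih fun t ht => h t (by omega)
    omega

end SkewSsyt

namespace IsLR

variable {A : SkewShape} {T : SkewSsyt A}

theorem card_filter_le_of_readClosed (hT : IsLR T) (P : ℕ × ℕ → Prop) [DecidablePred P]
    (hP : ∀ c ∈ A.cells, ∀ c' ∈ A.cells, P c → readBefore c' c → P c') (v : ℕ) :
    #{c ∈ A.cells | P c ∧ T.entry c.1 c.2 = v + 2} ≤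
      #{c ∈ A.cells | P c ∧ T.entry c.1 c.2 = v + 1} := by
  obtain hempty | hne :=
    (A.cells.filter fun c => P c ∧ T.entry c.1 c.2 = v + 2).eq_empty_or_nonempty
  · simp [hempty]
  obtain ⟨c, hc, hlast⟩ := hne.exists_readBefore_max
  obtain ⟨hcA, hPc, hcv⟩ := mem_filter.1 hc
  calc #{c ∈ A.cells | P c ∧ T.entry c.1 c.2 = v + 2}
      ≤ #{c' ∈ A.cells | T.entry c'.1 c'.2 = v + 2 ∧ (readBefore c' c ∨ c' = c)} :=
        card_le_card fun c' hc' => by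
          simp only [mem_filter] at hc' ⊢
          exact ⟨hc'.1, hc'.2.2, hlast c' (mem_filter.2 hc')⟩
    _ ≤ #{c' ∈ A.cells | T.entry c'.1 c'.2 = v + 1 ∧ readBefore c' c} := hT c hcA v hcv
    _ ≤ #{c ∈ A.cells | P c ∧ T.entry c.1 c.2 = v + 1} :=
        card_le_card fun c' hc' => by
          simp only [mem_filter] at hc' ⊢
          exact ⟨hc'.1, hP c hcA c' hc'.1 hPc hc'.2.2, hc'.2.1⟩

theorem contentCount_succ_le (hT : IsLR T) (v : ℕ) :
    contentCount T (v + 2) ≤ contentCount T (v + 1) := by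
  simpa [contentCount] using hT.card_filter_le_of_readClosed (fun _ => True) (by simp) v

theorem exists_mem_support (hT : IsLR T) : ∃ ν ∈ A.support, HasContent T ν := by
  set N := A.cells.sup fun c => T.entry c.1 c.2
  have hanti : Antitone fun v => contentCount T (v + 1) :=
    antitone_nat_of_succ_le hT.contentCount_succ_le
  have hcontent : HasContent T ((List.range N).map fun v => contentCount T (v + 1)) := by
    intro v
    by_cases hv : v < N
    · simp [List.getD_eq_getElem?_getD, hv]
    · rw [List.getD_eq_default _ _ (by simpa using hv), contentCount, card_eq_zero]
      refine filter_false_of_mem fun c hc => ?_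
      have : T.entry c.1 c.2 ≤ N := le_sup (f := fun c => T.entry c.1 c.2) hc
      omega
  refine ⟨_, ⟨?_, T, hT, hcontent⟩, hcontent⟩
  exact List.pairwise_map.2 (List.pairwise_lt_range.imp fun h => hanti h.le)

/-- The cells of rows `< r` together with the cells of row `r` carrying entries `≥ v + 2` form
an initial segment of the reading order, because rows are weakly increasing. -/
theorem card_rows_lt_succ_le (hT : IsLR T) (v r : ℕ) :
    #{c ∈ A.cells | T.entry c.1 c.2 = v + 2 ∧ c.1 < r + 1} ≤
      #{c ∈ A.cells | T.entry c.1 c.2 = v + 1 ∧ c.1 < r} := by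
  have key := hT.card_filter_le_of_readClosed
    (fun c => c.1 < r ∨ (c.1 = r ∧ v + 2 ≤ T.entry c.1 c.2)) ?_ v
  · refine le_of_eq_of_le (congrArg card (filter_congr fun c _ => ?_)) (key.trans_eq
      (congrArg card (filter_congr fun c _ => ?_))) <;> omega
  rintro ⟨i, j⟩ hc ⟨i', j'⟩ hc' hP (hi | ⟨rfl, hj⟩)
  · omega
  · rcases hP with hP | ⟨rfl, hv⟩
    · omega
    · exact Or.inr ⟨rfl, hv.trans (T.row_weak _ _ _ hj.le hc hc')⟩

theorem card_row_gt_le (hT : IsLR T) (r : ℕ) {p : ℕ} (hp : 1 ≤ p) :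
    #{c ∈ A.cells | c.1 = r ∧ p < T.entry c.1 c.2} ≤
      #{c ∈ A.cells | T.entry c.1 c.2 = p ∧ c.1 < r} := by
  set E := A.cells.sup fun c => T.entry c.1 c.2
  have hE : ∀ c ∈ A.cells, T.entry c.1 c.2 ≤ E :=
    fun c hc => le_sup (f := fun c => T.entry c.1 c.2) hc
  suffices ∀ n p, 1 ≤ p → E ≤ p + n →
      #{c ∈ A.cells | c.1 = r ∧ p < T.entry c.1 c.2} ≤
        #{c ∈ A.cells | T.entry c.1 c.2 = p ∧ c.1 < r} from this E p hp (by omega)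
  intro n
  induction n with
  | zero =>
    intro p _ hEp
    refine (card_eq_zero.2 (filter_false_of_mem fun c hc => ?_)).trans_le (Nat.zero_le _)
    have := hE c hc
    omega
  | succ n ih =>
    intro p hp hEp
    obtain ⟨v, rfl⟩ : ∃ v, p = v + 1 := ⟨p - 1, by omega⟩
    calc #{c ∈ A.cells | c.1 = r ∧ v + 1 < T.entry c.1 c.2}
        = #{c ∈ A.cells | c.1 = r ∧ T.entry c.1 c.2 = v + 2} +
            #{c ∈ A.cells | c.1 = r ∧ v + 2 < T.entry c.1 c.2} :=
          card_filter_eq_add_of_iff (fun _ _ => by omega) (fun _ _ => by omega)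
      _ ≤ #{c ∈ A.cells | c.1 = r ∧ T.entry c.1 c.2 = v + 2} +
            #{c ∈ A.cells | T.entry c.1 c.2 = v + 2 ∧ c.1 < r} :=
          Nat.add_le_add_left (ih (v + 2) (by omega) (by omega)) _
      _ = #{c ∈ A.cells | T.entry c.1 c.2 = v + 2 ∧ c.1 < r + 1} :=
          (card_filter_eq_add_of_iff (fun _ _ => by omega) (fun _ _ => by omega)).symm
      _ ≤ #{c ∈ A.cells | T.entry c.1 c.2 = v + 1 ∧ c.1 < r} := hT.card_rows_lt_succ_le v r

/-- The cells of the bottom row of a window of `k` rows, in the columns common to these rows,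
carry entries `≥ k`; those with entries `> p` are outnumbered by the entries `p` above them. -/
theorem overlap_le (hT : IsLR T) {k p : ℕ} (hk : 1 ≤ k) (hkp : k ≤ p) (a : ℕ) :
    A.overlap k a ≤ #{c ∈ A.cells |
      (c.1 = a + k - 1 ∧ k ≤ T.entry c.1 c.2 ∧ T.entry c.1 c.2 ≤ p) ∨
        (c.1 < a + k - 1 ∧ T.entry c.1 c.2 = p)} := by
  have hcol : A.overlap k a ≤ #{c ∈ A.cells | c.1 = a + k - 1 ∧ k ≤ T.entry c.1 c.2} := by
    refine card_le_card_of_injOn (fun j => (a + k - 1, j)) (fun j hj => ?_)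
      (fun _ _ _ _ h => (Prod.mk.inj h).2)
    have hj := (mem_filter.1 hj).2
    have hrow : a + (k - 1) = a + k - 1 := by omega
    have hentry := T.le_entry_of_forall_mem (n := k - 1) fun t ht => hj t (by omega)
    rw [hrow] at hentry
    exact mem_filter.2 ⟨hrow ▸ hj (k - 1) (by omega), rfl, show k ≤ T.entry (a + k - 1) j by omega⟩
  calc A.overlap k a
      ≤ #{c ∈ A.cells | c.1 = a + k - 1 ∧ k ≤ T.entry c.1 c.2} := hcol
    _ = #{c ∈ A.cells | c.1 = a + k - 1 ∧ k ≤ T.entry c.1 c.2 ∧ T.entry c.1 c.2 ≤ p} +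
          #{c ∈ A.cells | c.1 = a + k - 1 ∧ p < T.entry c.1 c.2} :=
        card_filter_eq_add_of_iff (fun _ _ => by omega) (fun _ _ => by omega)
    _ ≤ #{c ∈ A.cells | c.1 = a + k - 1 ∧ k ≤ T.entry c.1 c.2 ∧ T.entry c.1 c.2 ≤ p} +
          #{c ∈ A.cells | T.entry c.1 c.2 = p ∧ c.1 < a + k - 1} :=
        Nat.add_le_add_left (hT.card_row_gt_le _ (by omega)) _
    _ = _ := (card_filter_eq_add_of_iff (fun _ _ => by omega) (fun _ _ => by omega)).symm

/-- The `s`-th window of `S` (in increasing order) is charged to entries in `[k, k + s]` of its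
bottom row and entries `k + s` above it; these sets of cells are disjoint for distinct windows. -/
theorem sum_overlap_le_countIco (hT : IsLR T) {k : ℕ} (hk : 1 ≤ k) (S : Finset ℕ) :
    ∑ a ∈ S, A.overlap k a ≤ T.countIco k (k + #S) := by
  classical
  set U : ℕ → Finset (ℕ × ℕ) := fun a => {c ∈ A.cells |
    (c.1 = a + k - 1 ∧ k ≤ T.entry c.1 c.2 ∧ T.entry c.1 c.2 ≤ k + Nat.count (· ∈ S) a) ∨
      (c.1 < a + k - 1 ∧ T.entry c.1 c.2 = k + Nat.count (· ∈ S) a)}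
  have hdisj : (S : Set ℕ).PairwiseDisjoint U := by
    have key : ∀ a ∈ S, ∀ b, a < b → Disjoint (U a) (U b) := fun a ha b hab => by
      have := Nat.count_strict_mono (p := (· ∈ S)) ha hab
      refine disjoint_filter.2 fun c _ hca hcb => ?_
      omega
    intro a ha b hb hab
    rcases lt_or_gt_of_ne hab with h | h
    · exact key a ha b h
    · exact (key b hb a h).symm
  have hsub : S.biUnion U ⊆ {c ∈ A.cells | T.entry c.1 c.2 ∈ Ico k (k + #S)} := by
    intro c hc
    obtain ⟨a, ha, hc⟩ := mem_biUnion.1 hc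
    obtain ⟨hcA, hc⟩ := mem_filter.1 hc
    have := Nat.count_mem_lt_card ha
    exact mem_filter.2 ⟨hcA, mem_Ico.2 (by omega)⟩
  calc ∑ a ∈ S, A.overlap k a
      ≤ ∑ a ∈ S, #(U a) := sum_le_sum fun a _ => hT.overlap_le hk (by omega) a
    _ = #(S.biUnion U) := (card_biUnion hdisj).symm
    _ ≤ T.countIco k (k + #S) := card_le_card hsub

theorem take_sum_rowsK_le (hT : IsLR T) {k : ℕ} (hk : 1 ≤ k) (m : ℕ) :
    ((A.rowsK k).take m).sum ≤ T.countIco k (k + m) := by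
  have hsub : ((A.rowsK k).take m).Subperm
      ((List.range (A.numRows + 1 - k)).map (A.overlap k)) :=
    ((List.take_sublist m _).subperm.trans (List.mergeSort_perm _ _).subperm).trans
      (List.filter_sublist ..).subperm
  obtain ⟨S, hS, hsum⟩ := hsub.exists_finset_sum_eq List.nodup_range
  calc ((A.rowsK k).take m).sum
      = ∑ a ∈ S, A.overlap k a := hsum
    _ ≤ T.countIco k (k + #S) := hT.sum_overlap_le_countIco hk S
    _ ≤ T.countIco k (k + m) := T.countIco_mono_right k (by simp [hS])

end IsLR

theorem isLR_of_injOn {A : SkewShape} (T : SkewSsyt A)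
    (h : ∀ v, ∃ ψ : ℕ × ℕ → ℕ × ℕ,
      (∀ c ∈ A.cells, T.entry c.1 c.2 = v + 2 →
        ψ c ∈ A.cells ∧ T.entry (ψ c).1 (ψ c).2 = v + 1 ∧ (ψ c).1 < c.1) ∧
      Set.InjOn ψ {c | c ∈ A.cells ∧ T.entry c.1 c.2 = v + 2}) : IsLR T := by
  intro c _ v _
  obtain ⟨ψ, hψ, hinj⟩ := h v
  refine card_le_card_of_injOn ψ (fun c' hc' => ?_) (hinj.mono fun c' hc' => ?_)
  · obtain ⟨hc'A, hv, hbefore⟩ := mem_filter.1 hc'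
    obtain ⟨hψA, hψv, hψrow⟩ := hψ c' hc'A hv
    have : c'.1 ≤ c.1 := by
      rcases hbefore with hb | rfl
      · unfold readBefore at hb
        omega
      · rfl
    exact mem_filter.2 ⟨hψA, hψv, Or.inl (by omega)⟩
  · obtain ⟨hc'A, hv, -⟩ := mem_filter.1 hc'
    exact ⟨hc'A, hv⟩

namespace SkewShape

variable (B : SkewShape) (k : ℕ)

/-- A cell `(i, j)` among the top `k - 1` cells of its column gets its position in the column.
Any other (deep) cell ends a column segment of length `k`; it is the `q`-th cell from the right of
the overlap of the window of rows `i + 1 - k, …, i`, where `q = λᵢ - j`, and it gets `k` plus the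
number of earlier windows whose overlap has at least `q` cells. -/
def canonicalEntry (i j : ℕ) : ℕ :=
  if (i, j) ∈ B.cells then
    if i + 1 < B.inner.colLen j + k then i + 1 - B.inner.colLen j
    else k + Nat.count (fun w => B.outer.rowLen i - j ≤ B.overlap k w) (i + 1 - k)
  else 0

def windowCell (w q : ℕ) : ℕ × ℕ := (w + k - 1, B.outer.rowLen (w + k - 1) - q)

variable {B k} {i j : ℕ}

theorem canonicalEntry_of_shallow (h : (i, j) ∈ B.cells) (hd : i + 1 < B.inner.colLen j + k) :
    B.canonicalEntry k i j = i + 1 - B.inner.colLen j := by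
  simp [canonicalEntry, h, hd]

theorem canonicalEntry_of_deep (h : (i, j) ∈ B.cells) (hd : B.inner.colLen j + k ≤ i + 1) :
    B.canonicalEntry k i j =
      k + Nat.count (fun w => B.outer.rowLen i - j ≤ B.overlap k w) (i + 1 - k) := by
  simp [canonicalEntry, h, Nat.not_lt.2 hd]

theorem deep_of_le_canonicalEntry (h : (i, j) ∈ B.cells) (hv : k ≤ B.canonicalEntry k i j) :
    B.inner.colLen j + k ≤ i + 1 := by
  by_contra hd
  rw [canonicalEntry_of_shallow h (by omega)] at hv
  have := (B.mem_cells_iff_colLen.1 h).1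
  omega

theorem le_overlap_of_deep (hk : 1 ≤ k) (hd : B.inner.colLen j + k ≤ i + 1) :
    B.outer.rowLen i - j ≤ B.overlap k (i + 1 - k) := by
  have hμ := B.inner.colLen_le_iff_rowLen_le.1 (show B.inner.colLen j ≤ i + 1 - k by omega)
  rw [overlap_eq hk, show i + 1 - k + k - 1 = i by omega]
  omega

theorem windowCell_mem_and_deep (hk : 1 ≤ k) {w q : ℕ} (hq : 1 ≤ q) (hqw : q ≤ B.overlap k w) :
    B.windowCell k w q ∈ B.cells ∧
      B.inner.colLen (B.windowCell k w q).2 + k ≤ (B.windowCell k w q).1 + 1 := by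
  rw [overlap_eq hk] at hqw
  have hμ : B.inner.rowLen (w + k - 1) ≤ B.inner.rowLen w := B.inner.rowLen_anti _ _ (by omega)
  refine ⟨B.mem_cells_iff_rowLen.2 ⟨by omega, by omega⟩, ?_⟩
  have := B.inner.colLen_le_iff_rowLen_le.2
    (show B.inner.rowLen w ≤ B.outer.rowLen (w + k - 1) - q by omega)
  simp only [windowCell]
  omega

theorem canonicalEntry_windowCell (hk : 1 ≤ k) {w q : ℕ} (hq : 1 ≤ q) (hqw : q ≤ B.overlap k w) :
    B.canonicalEntry k (B.windowCell k w q).1 (B.windowCell k w q).2 =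
      k + Nat.count (fun w' => q ≤ B.overlap k w') w := by
  obtain ⟨hmem, hdeep⟩ := windowCell_mem_and_deep hk hq hqw
  simp only [windowCell] at hmem hdeep ⊢
  have hq' : q ≤ B.outer.rowLen (w + k - 1) := hqw.trans ((overlap_eq hk w).trans_le (by omega))
  rw [canonicalEntry_of_deep hmem hdeep, show w + k - 1 + 1 - k = w by omega,
    Nat.sub_sub_self hq']

theorem windowCell_of_deep (h : (i, j) ∈ B.cells) (hd : B.inner.colLen j + k ≤ i + 1) :
    B.windowCell k (i + 1 - k) (B.outer.rowLen i - j) = (i, j) := by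
  have := (B.mem_cells_iff_rowLen.1 h).2
  simp only [windowCell, show i + 1 - k + k - 1 = i by omega, Prod.mk.injEq, true_and]
  omega

theorem eq_of_windowCell_eq (hk : 1 ≤ k) {w₁ q₁ w₂ q₂ : ℕ} (h₁ : q₁ ≤ B.overlap k w₁)
    (h₂ : q₂ ≤ B.overlap k w₂) (h : B.windowCell k w₁ q₁ = B.windowCell k w₂ q₂) :
    w₁ = w₂ ∧ q₁ = q₂ := by
  simp only [windowCell, Prod.mk.injEq] at h
  obtain ⟨hw, hq⟩ := h
  obtain rfl : w₁ = w₂ := by omega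
  rw [overlap_eq hk] at h₁ h₂
  exact ⟨rfl, by omega⟩

theorem one_le_canonicalEntry (hk : 1 ≤ k) (h : (i, j) ∈ B.cells) :
    1 ≤ B.canonicalEntry k i j := by
  by_cases hd : i + 1 < B.inner.colLen j + k
  · rw [canonicalEntry_of_shallow h hd]
    have := (B.mem_cells_iff_colLen.1 h).1
    omega
  · rw [canonicalEntry_of_deep h (by omega)]
    omega

theorem canonicalEntry_mono_right {j₁ j₂ : ℕ} (hj : j₁ ≤ j₂) (h₁ : (i, j₁) ∈ B.cells)
    (h₂ : (i, j₂) ∈ B.cells) : B.canonicalEntry k i j₁ ≤ B.canonicalEntry k i j₂ := by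
  have hcol := B.inner.colLen_anti _ _ hj
  by_cases hd₂ : i + 1 < B.inner.colLen j₂ + k
  · rw [canonicalEntry_of_shallow h₁ (by omega), canonicalEntry_of_shallow h₂ hd₂]
    omega
  rw [canonicalEntry_of_deep h₂ (by omega)]
  by_cases hd₁ : i + 1 < B.inner.colLen j₁ + k
  · rw [canonicalEntry_of_shallow h₁ hd₁]
    omega
  rw [canonicalEntry_of_deep h₁ (by omega)]
  have := Nat.count_mono_left (n := i + 1 - k)
    (p := fun w => B.outer.rowLen i - j₁ ≤ B.overlap k w)
    (q := fun w => B.outer.rowLen i - j₂ ≤ B.overlap k w) fun _ _ => le_trans (by omega)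
  omega

/-- A cell ending a column segment of length `k` counts the window ending just above it among
the earlier windows. -/
theorem canonicalEntry_lt_succ (hk : 1 ≤ k) (h : (i, j) ∈ B.cells) (h' : (i + 1, j) ∈ B.cells) :
    B.canonicalEntry k i j < B.canonicalEntry k (i + 1) j := by
  by_cases hd' : i + 2 < B.inner.colLen j + k
  · rw [canonicalEntry_of_shallow h (by omega), canonicalEntry_of_shallow h' hd']
    have := (B.mem_cells_iff_colLen.1 h).1
    omega
  rw [canonicalEntry_of_deep h' (by omega)]
  by_cases hd : i + 1 < B.inner.colLen j + k
  · rw [canonicalEntry_of_shallow h hd]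
    omega
  rw [canonicalEntry_of_deep h (by omega), show i + 1 + 1 - k = i + 1 - k + 1 by omega,
    Nat.count_succ]
  have hrow := B.outer.rowLen_anti i (i + 1) (by omega)
  have hov := le_overlap_of_deep (B := B) (i := i) (j := j) hk (by omega)
  have := Nat.count_mono_left (n := i + 1 - k)
    (p := fun w => B.outer.rowLen i - j ≤ B.overlap k w)
    (q := fun w => B.outer.rowLen (i + 1) - j ≤ B.overlap k w) fun _ _ => le_trans (by omega)
  simp only [if_pos (show B.outer.rowLen (i + 1) - j ≤ B.overlap k (i + 1 - k) by omega)]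
  omega

variable (B) in
def canonicalFilling (hk : 1 ≤ k) : SkewSsyt B where
  entry := B.canonicalEntry k
  pos _ _ := one_le_canonicalEntry hk
  zeros i j h := by simp [canonicalEntry, h]
  row_weak _ _ _ := canonicalEntry_mono_right
  col_strict i₁ i₂ j hi h₁ h₂ :=
    strictMonoOn_of_lt_add_one (f := fun i => B.canonicalEntry k i j) Set.ordConnected_Ico
      (fun i _ hi hi' => canonicalEntry_lt_succ hk (B.mem_cells_iff_colLen.2 hi)
        (B.mem_cells_iff_colLen.2 hi'))
      (B.mem_cells_iff_colLen.1 h₁) (B.mem_cells_iff_colLen.1 h₂) hi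

/-- A cell with entry `k` cannot end a column segment longer than `k`: it would count the window
ending just above it. -/
theorem canonicalEntry_above {v : ℕ} (hk : 1 ≤ k) (h : (i, j) ∈ B.cells)
    (hv : B.canonicalEntry k i j = v + 2) (hvk : v + 2 ≤ k) :
    (i - 1, j) ∈ B.cells ∧ B.canonicalEntry k (i - 1) j = v + 1 ∧ i - 1 < i := by
  obtain ⟨hcol, hrow⟩ := B.mem_cells_iff_colLen.1 h
  have hshallow : i < B.inner.colLen j + k := by
    by_contra! hd
    rw [canonicalEntry_of_deep h (by omega)] at hv
    have hov := le_overlap_of_deep (B := B) (i := i - 1) (j := j) hk (by omega)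
    rw [show i - 1 + 1 - k = i - k by omega] at hov
    have hlam := B.outer.rowLen_anti (i - 1) i (by omega)
    have := Nat.count_strict_mono (p := fun w => B.outer.rowLen i - j ≤ B.overlap k w)
      (m := i - k) (n := i + 1 - k) (by omega) (by omega)
    omega
  have hpos : i + 1 - B.inner.colLen j = v + 2 := by
    by_cases hd : i + 1 < B.inner.colLen j + k
    · rwa [canonicalEntry_of_shallow h hd] at hv
    · rw [canonicalEntry_of_deep h (by omega)] at hv
      omega
  have hmem : (i - 1, j) ∈ B.cells := B.mem_cells_iff_colLen.2 ⟨by omega, by omega⟩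
  refine ⟨hmem, ?_, by omega⟩
  rw [canonicalEntry_of_shallow hmem (by omega)]
  omega

theorem deep_and_count_of_lt_canonicalEntry {v : ℕ} (hk : 1 ≤ k) (h : (i, j) ∈ B.cells)
    (hv : B.canonicalEntry k i j = v + 2) (hkv : k < v + 2) :
    B.inner.colLen j + k ≤ i + 1 ∧ 1 ≤ B.outer.rowLen i - j ∧
      B.outer.rowLen i - j ≤ B.overlap k (i + 1 - k) ∧
      Nat.count (fun w => B.outer.rowLen i - j ≤ B.overlap k w) (i + 1 - k) = v + 2 - k := by
  have hd := deep_of_le_canonicalEntry h (hv ▸ hkv.le)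
  rw [canonicalEntry_of_deep h hd] at hv
  have := (B.mem_cells_iff_rowLen.1 h).2
  exact ⟨hd, by omega, le_overlap_of_deep hk hd, by omega⟩

/-- An entry `v + 2 > k` in row `i` at distance `q` from the right end is matched with the cell at
the same distance `q` in the last earlier window whose overlap has at least `q` cells. -/
theorem canonicalEntry_prevWindowCell {v : ℕ} (hk : 1 ≤ k) (h : (i, j) ∈ B.cells)
    (hv : B.canonicalEntry k i j = v + 2) (hkv : k < v + 2) :
    let c := B.windowCell k
      (Nat.nth (fun w => B.outer.rowLen i - j ≤ B.overlap k w) (v + 1 - k)) (B.outer.rowLen i - j)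
    c ∈ B.cells ∧ B.canonicalEntry k c.1 c.2 = v + 1 ∧ c.1 < i := by
  obtain ⟨hd, hq, -, hcount⟩ := deep_and_count_of_lt_canonicalEntry hk h hv hkv
  obtain ⟨hlt, hov, hcount'⟩ := Nat.nth_lt_and_mem_and_count_nth (n := v + 1 - k)
    (p := fun w => B.outer.rowLen i - j ≤ B.overlap k w) (w := i + 1 - k) (by omega)
  refine ⟨(windowCell_mem_and_deep hk hq hov).1, ?_, ?_⟩
  · rw [canonicalEntry_windowCell hk hq hov, hcount']
    omega
  · simp only [windowCell]
    omega

theorem isLR_canonicalFilling (hk : 1 ≤ k) : IsLR (B.canonicalFilling hk) := by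
  refine isLR_of_injOn _ fun v => ?_
  rcases le_or_gt (v + 2) k with hvk | hkv
  · refine ⟨fun c => (c.1 - 1, c.2), fun c hc hv => canonicalEntry_above hk hc hv hvk, ?_⟩
    rintro ⟨i₁, j₁⟩ ⟨h₁, hv₁⟩ ⟨i₂, j₂⟩ ⟨h₂, hv₂⟩ heq
    have := (canonicalEntry_above hk h₁ hv₁ hvk).2.2
    have := (canonicalEntry_above hk h₂ hv₂ hvk).2.2
    simp only [Prod.mk.injEq] at heq ⊢
    omega
  refine ⟨fun c => B.windowCell k
      (Nat.nth (fun w => B.outer.rowLen c.1 - c.2 ≤ B.overlap k w) (v + 1 - k))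
      (B.outer.rowLen c.1 - c.2),
    fun c hc hv => canonicalEntry_prevWindowCell hk hc hv hkv, ?_⟩
  rintro ⟨i₁, j₁⟩ ⟨h₁, hv₁⟩ ⟨i₂, j₂⟩ ⟨h₂, hv₂⟩ heq
  obtain ⟨hd₁, -, hov₁, hcount₁⟩ := deep_and_count_of_lt_canonicalEntry hk h₁ hv₁ hkv
  obtain ⟨hd₂, -, hov₂, hcount₂⟩ := deep_and_count_of_lt_canonicalEntry hk h₂ hv₂ hkv
  obtain ⟨-, hov₁', -⟩ := Nat.nth_lt_and_mem_and_count_nth (n := v + 1 - k)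
    (p := fun w => B.outer.rowLen i₁ - j₁ ≤ B.overlap k w) (w := i₁ + 1 - k) (by omega)
  obtain ⟨-, hov₂', -⟩ := Nat.nth_lt_and_mem_and_count_nth (n := v + 1 - k)
    (p := fun w => B.outer.rowLen i₂ - j₂ ≤ B.overlap k w) (w := i₂ + 1 - k) (by omega)
  obtain ⟨-, hq⟩ := eq_of_windowCell_eq hk hov₁' hov₂' heq
  rw [hq] at hov₁ hcount₁
  have hw := Nat.count_injective (p := fun w => B.outer.rowLen i₂ - j₂ ≤ B.overlap k w)
    hov₁ hov₂ (hcount₁.trans hcount₂.symm)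
  rw [← windowCell_of_deep h₁ hd₁, ← windowCell_of_deep h₂ hd₂, hq, hw]

/-- The cells with entries in `[k, k + m)` are the window cells `(w, q)` such that fewer than `m`
earlier windows have overlap `≥ q`. -/
theorem countIco_canonicalFilling_le (hk : 1 ≤ k) (m : ℕ) :
    (B.canonicalFilling hk).countIco k (k + m) ≤
      ∑ q ∈ Icc 1 B.numCols, min m (Nat.count (q ≤ B.overlap k ·) (B.numRows + 1 - k)) := by
  calc (B.canonicalFilling hk).countIco k (k + m)
      ≤ #{x ∈ Icc 1 B.numCols ×ˢ range (B.numRows + 1 - k) |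
          x.1 ≤ B.overlap k x.2 ∧ Nat.count (x.1 ≤ B.overlap k ·) x.2 < m} := by
        refine card_le_card_of_injOn (fun c => (B.outer.rowLen c.1 - c.2, c.1 + 1 - k))
          (fun c hc => ?_) (fun ⟨i₁, j₁⟩ hc₁ ⟨i₂, j₂⟩ hc₂ heq => ?_)
        · obtain ⟨hcB, hv⟩ := mem_filter.1 hc
          obtain ⟨hv₁, hv₂⟩ := mem_Ico.1 hv
          have hd := deep_of_le_canonicalEntry hcB hv₁
          have hov := le_overlap_of_deep hk hd
          have := (B.mem_cells_iff_rowLen.1 hcB).2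
          have := fst_lt_numRows hcB
          have := overlap_le_numCols (A := B) k (c.1 + 1 - k)
          change B.canonicalEntry k c.1 c.2 < k + m at hv₂
          rw [canonicalEntry_of_deep hcB hd] at hv₂
          simp only [coe_filter, Set.mem_ofPred_eq, mem_product, mem_Icc, mem_range]
          omega
        · obtain ⟨hc₁B, hv₁⟩ := mem_filter.1 hc₁
          obtain ⟨hc₂B, hv₂⟩ := mem_filter.1 hc₂
          simp only [Prod.mk.injEq] at heq
          rw [← windowCell_of_deep hc₁B (deep_of_le_canonicalEntry hc₁B (mem_Ico.1 hv₁).1),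
            ← windowCell_of_deep hc₂B (deep_of_le_canonicalEntry hc₂B (mem_Ico.1 hv₂).1),
            heq.1, heq.2]
    _ = ∑ q ∈ Icc 1 B.numCols, #{w ∈ range (B.numRows + 1 - k) |
          q ≤ B.overlap k w ∧ Nat.count (q ≤ B.overlap k ·) w < m} := by
        simp only [card_filter, sum_product]
    _ ≤ _ := sum_le_sum fun q _ => Nat.card_filter_count_lt_le _ _ _

end SkewShape

/-- Theorem `thm:main`.
Let `A` and `B` be skew shapes.  If `supp(A) ⊇ supp(B)`, i.e. every partition appearing
in the Schur expansion of `s_B` also appears in the Schur expansion of `s_A`, then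
`rows_k(A) ⊴ rows_k(B)` in the dominance order for all `k ≥ 1`. -/
theorem rowsK_dom_of_support_subset (A B : SkewShape) (h : B.support ⊆ A.support) :
    ∀ k, 1 ≤ k → Dom (A.rowsK k) (B.rowsK k) := by
  intro k hk m
  obtain ⟨ν, hνB, hTB⟩ := (B.isLR_canonicalFilling hk).exists_mem_support
  obtain ⟨-, TA, hTA, hνA⟩ := h hνB
  calc ((A.rowsK k).take m).sum
      ≤ TA.countIco k (k + m) := hTA.take_sum_rowsK_le hk m
    _ = (B.canonicalFilling hk).countIco k (k + m) := TA.countIco_eq_of_hasContent hνA hTB hk _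
    _ ≤ _ := B.countIco_canonicalFilling_le hk m
    _ = ((B.rowsK k).take m).sum := (B.take_sum_rowsK k m).symm
end

section
/- Let A and B be skew shapes. If the difference s_A − s_B of their skew Schur functions is Schur-positive, then rows_k(A) ⊴ rows_k(B) in the dominance order for all k ≥ 1. -/
open Finset

/-!
Fix `k ≥ 1`. Deleting the top box of every column `k - 1` times turns the `k`-row overlaps of
`B` into row lengths. A shape always has an LR filling whose content is its partition of row
lengths (right-justify the rows and number every column from the top down), and refilling the
deleted boxes with `1`'s, one layer at a time, turns it into an LR filling of `B` whose content
`ν` satisfies `(ν_k, ν_{k+1}, …) = rows_k(B)`. Schur positivity gives an LR filling of `A` of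
the same content. In an LR filling, any `r` of the `k`-row overlaps add up to at most
`ν_k + ⋯ + ν_{k+r-1}`: deleting the `1`'s lowers `k` by one, since entries below the top of a
column are `≥ 2`; and for `k = 1` the lattice condition shows that a row has no more entries
`≥ 2` than there are `1`'s above it.
-/

theorem sortDesc_pairwise (l : List ℕ) : (sortDesc l).Pairwise (· ≥ ·) :=
  (List.pairwise_mergeSort (le := fun a b : ℕ => decide (b ≤ a))
    (fun _ _ _ hab hbc => by simp only [decide_eq_true_eq] at *; omega)
    (fun a b => by simpa using le_total b a) l).imp (by simp)

theorem sortDesc_perm (l : List ℕ) : (sortDesc l).Perm l := List.mergeSort_perm l _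

theorem List.sum_take_eq_sum_range_getD (l : List ℕ) (m : ℕ) :
    (l.take m).sum = ∑ t ∈ Finset.range m, l.getD t 0 := by
  induction m with
  | zero => simp
  | succ m ih =>
    rw [Finset.sum_range_succ, ← ih]
    by_cases h : m < l.length
    · rw [sum_take_succ l m h, getD_eq_getElem l 0 h]
    · rw [getD_eq_default l 0 (by omega), take_of_length_le (by omega),
        take_of_length_le (by omega), add_zero]

theorem List.pairwise_ge_of_getD_succ_le {l : List ℕ}
    (h : ∀ v, l.getD (v + 1) 0 ≤ l.getD v 0) : l.Pairwise (· ≥ ·) := by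
  refine pairwise_iff_getElem.mpr fun i j hi hj hij => ?_
  rw [← getD_eq_getElem l 0 hi, ← getD_eq_getElem l 0 hj]
  exact antitone_nat_of_succ_le (f := fun v => l.getD v 0) h hij.le

theorem List.le_getD_iff_lt_countP {l : List ℕ} (hl : l.Pairwise (· ≥ ·)) (t : ℕ) :
    ∀ v, t + 1 ≤ l.getD v 0 ↔ v < l.countP (fun x => t + 1 ≤ x) := by
  induction l with
  | nil => simp
  | cons a l ih =>
    obtain ⟨ha, hl⟩ := pairwise_cons.mp hl
    intro v
    have h0 : ¬ t + 1 ≤ a → l.countP (fun x => t + 1 ≤ x) = 0 := fun hta =>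
      countP_eq_zero.mpr fun x hx => by have := ha x hx; simp only [decide_eq_true_eq]; omega
    by_cases hta : t + 1 ≤ a
    · have hp : decide (t + 1 ≤ a) = true := decide_eq_true hta
      cases v <;> simp only [getD_cons_zero, getD_cons_succ, ih hl, countP_cons, hp, if_true] <;>
        omega
    · have hp : decide (t + 1 ≤ a) = false := decide_eq_false hta
      cases v <;> simp only [getD_cons_zero, getD_cons_succ, ih hl, countP_cons, hp, h0 hta,
        Bool.false_eq_true, if_false] <;> omega

theorem List.getD_eq_card_lt_countP {l : List ℕ} (hl : l.Pairwise (· ≥ ·)) {C : ℕ}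
    (hC : ∀ x ∈ l, x ≤ C) (v : ℕ) :
    l.getD v 0 = #{t ∈ Finset.range C | v < l.countP (fun x => t + 1 ≤ x)} := by
  have hvC : l.getD v 0 ≤ C := by
    by_cases h : v < l.length
    · rw [getD_eq_getElem l 0 h]; exact hC _ (getElem_mem h)
    · rw [getD_eq_default l 0 (by omega)]; omega
  rw [← Finset.card_range (l.getD v 0)]
  congr 1
  ext t
  simp only [Finset.mem_filter, Finset.mem_range, ← le_getD_iff_lt_countP hl]
  omega

theorem List.exists_finset_of_subperm_map_range {f : ℕ → ℕ} {n : ℕ} {s : List ℕ}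
    (h : s.Subperm ((List.range n).map f)) :
    ∃ R : Finset ℕ, R.card = s.length ∧ s.sum = ∑ i ∈ R, f i := by
  obtain ⟨t, hts, htl⟩ := h
  obtain ⟨l', hl', rfl⟩ := sublist_map_iff.mp htl
  have hnd : l'.Nodup := hl'.nodup nodup_range
  refine ⟨l'.toFinset, ?_, ?_⟩
  · rw [toFinset_card_of_nodup hnd, ← hts.length_eq, length_map]
  · rw [← hts.sum_eq, sum_toFinset _ hnd]

def readKey (c : ℕ × ℕ) : ℕ ×ₗ ℕᵒᵈ := toLex (c.1, OrderDual.toDual c.2)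

theorem readKey_lt_iff {c c' : ℕ × ℕ} : readKey c < readKey c' ↔ readBefore c c' :=
  Prod.Lex.lt_iff

theorem readKey_le_iff {c c' : ℕ × ℕ} :
    readKey c ≤ readKey c' ↔ readBefore c c' ∨ c = c' := by
  have hinj : readKey c = readKey c' ↔ c = c' := by simp [readKey, Prod.ext_iff]
  rw [le_iff_lt_or_eq, readKey_lt_iff, hinj]

/-- A Littlewood–Richardson filling of an arbitrary finite set of boxes. Unlike `SkewSsyt`,
this notion is stable under deleting the boxes filled with `1`. -/
structure LRFilling where
  cells : Finset (ℕ × ℕ)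
  entry : ℕ × ℕ → ℕ
  one_le_entry : ∀ c ∈ cells, 1 ≤ entry c
  row_weak : ∀ i j1 j2, j1 ≤ j2 → (i, j1) ∈ cells → (i, j2) ∈ cells →
      entry (i, j1) ≤ entry (i, j2)
  col_strict : ∀ i1 i2 j, i1 < i2 → (i1, j) ∈ cells → (i2, j) ∈ cells →
      entry (i1, j) < entry (i2, j)
  lattice : ∀ c ∈ cells, ∀ v : ℕ, entry c = v + 2 →
    #{c' ∈ cells | entry c' = v + 2 ∧ (readBefore c' c ∨ c' = c)} ≤
      #{c' ∈ cells | entry c' = v + 1 ∧ readBefore c' c}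

namespace LRFilling

variable (F : LRFilling)

def count (w : ℕ) : ℕ := #{c ∈ F.cells | F.entry c = w}

def overlap (k i : ℕ) : ℕ :=
  #{j ∈ F.cells.image Prod.snd | ∀ t < k, (i + t, j) ∈ F.cells}

theorem card_entry_add_two_le {P : Finset (ℕ × ℕ)} (hP : P ⊆ F.cells)
    (hpre : ∀ c ∈ P, ∀ c' ∈ F.cells, readBefore c' c → c' ∈ P) (w : ℕ) :
    #{c ∈ P | F.entry c = w + 2} ≤ #{c ∈ P | F.entry c = w + 1} := by
  rcases {c ∈ P | F.entry c = w + 2}.eq_empty_or_nonempty with hempty | hne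
  · simp [hempty]
  obtain ⟨c, hc, hlast⟩ := exists_max_image _ readKey hne
  rw [mem_filter] at hc
  calc #{c' ∈ P | F.entry c' = w + 2}
      ≤ #{c' ∈ F.cells | F.entry c' = w + 2 ∧ (readBefore c' c ∨ c' = c)} := by
        refine card_le_card fun c' hc' => ?_
        have hle := readKey_le_iff.mp (hlast c' hc')
        rw [mem_filter] at hc' ⊢
        exact ⟨hP hc'.1, hc'.2, hle⟩
    _ ≤ #{c' ∈ F.cells | F.entry c' = w + 1 ∧ readBefore c' c} := F.lattice c (hP hc.1) w hc.2
    _ ≤ #{c' ∈ P | F.entry c' = w + 1} := by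
        refine card_le_card fun c' hc' => ?_
        rw [mem_filter] at hc' ⊢
        exact ⟨hpre c hc.1 c' hc'.1 hc'.2.2, hc'.2.1⟩

theorem count_add_two_le (w : ℕ) : F.count (w + 2) ≤ F.count (w + 1) :=
  F.card_entry_add_two_le subset_rfl (fun _ _ _ hc' _ => hc') w

theorem card_row_add_card_above_le (r w : ℕ) :
    #{c ∈ F.cells | c.1 = r ∧ F.entry c = w + 2} +
        #{c ∈ F.cells | c.1 < r ∧ F.entry c = w + 2} ≤
      #{c ∈ F.cells | c.1 < r ∧ F.entry c = w + 1} := by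
  -- the initial segment of the reading order that ends with the last `w + 2` of row `r`
  set P := {c ∈ F.cells | c.1 < r ∨ (c.1 = r ∧ w + 2 ≤ F.entry c)}
  have hpre : ∀ c ∈ P, ∀ c' ∈ F.cells, readBefore c' c → c' ∈ P := by
    rintro ⟨i, j⟩ hc ⟨i', j'⟩ hc' hbef
    simp only [P, mem_filter] at hc ⊢
    refine ⟨hc', ?_⟩
    rcases hbef with hlt | ⟨heq, hcol⟩
    · omega
    · dsimp only at heq hcol
      subst heq
      have := F.row_weak _ j j' hcol.le hc.1 hc'
      omega
  calc _ = #({c ∈ F.cells | c.1 = r ∧ F.entry c = w + 2} ∪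
          {c ∈ F.cells | c.1 < r ∧ F.entry c = w + 2}) := by
        rw [card_union_of_disjoint (disjoint_filter.mpr fun _ _ h1 h2 => by omega)]
    _ ≤ #{c ∈ P | F.entry c = w + 2} := by
        refine card_le_card fun c hc => ?_
        simp only [P, mem_union, mem_filter] at hc ⊢
        rcases hc with ⟨hc, h1, h2⟩ | ⟨hc, h1, h2⟩ <;> exact ⟨⟨hc, by omega⟩, h2⟩
    _ ≤ #{c ∈ P | F.entry c = w + 1} := F.card_entry_add_two_le (filter_subset _ _) hpre w
    _ ≤ #{c ∈ F.cells | c.1 < r ∧ F.entry c = w + 1} := by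
        refine card_le_card fun c hc => ?_
        simp only [P, mem_filter] at hc ⊢
        obtain ⟨⟨hc, h1⟩, h2⟩ := hc
        exact ⟨hc, by omega, h2⟩

theorem card_row_two_le_entry_le (r : ℕ) :
    #{c ∈ F.cells | c.1 = r ∧ 2 ≤ F.entry c} ≤
      #{c ∈ F.cells | c.1 < r ∧ F.entry c = 1} := by
  set above : ℕ → ℕ := fun w => #{c ∈ F.cells | c.1 < r ∧ F.entry c = w}
  have htelescope : ∀ N, #{c ∈ F.cells | c.1 = r ∧ 2 ≤ F.entry c ∧ F.entry c ≤ N + 1} +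
      above (N + 1) ≤ above 1 := by
    intro N
    induction N with
    | zero => rw [filter_false_of_mem fun c _ => by omega, card_empty, zero_add]
    | succ N ih =>
      have hsplit : {c ∈ F.cells | c.1 = r ∧ 2 ≤ F.entry c ∧ F.entry c ≤ N + 1 + 1} ⊆
          {c ∈ F.cells | c.1 = r ∧ 2 ≤ F.entry c ∧ F.entry c ≤ N + 1} ∪
            {c ∈ F.cells | c.1 = r ∧ F.entry c = N + 2} := by
        intro c hc
        simp only [mem_union, mem_filter] at hc ⊢
        obtain ⟨hc, h1, h2, h3⟩ := hc
        by_cases h : F.entry c = N + 2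
        · exact Or.inr ⟨hc, h1, h⟩
        · exact Or.inl ⟨hc, h1, h2, by omega⟩
      have := (card_le_card hsplit).trans (card_union_le _ _)
      have : #{c ∈ F.cells | c.1 = r ∧ F.entry c = N + 2} + above (N + 1 + 1) ≤
          above (N + 1) :=
        F.card_row_add_card_above_le r N
      omega
  set N := F.cells.sup F.entry
  calc _ = #{c ∈ F.cells | c.1 = r ∧ 2 ≤ F.entry c ∧ F.entry c ≤ N + 1} := by
        refine congrArg card (filter_congr fun c hc => ?_)
        have := le_sup (f := F.entry) hc
        omega
    _ ≤ above 1 := by have := htelescope N; omega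

def eraseOnes : LRFilling where
  cells := {c ∈ F.cells | F.entry c ≠ 1}
  entry c := F.entry c - 1
  one_le_entry c hc := by
    have := F.one_le_entry c (mem_filter.mp hc).1
    have := (mem_filter.mp hc).2
    omega
  row_weak i j1 j2 hj h1 h2 := by
    have := F.row_weak i j1 j2 hj (mem_filter.mp h1).1 (mem_filter.mp h2).1
    omega
  col_strict i1 i2 j hi h1 h2 := by
    have := F.col_strict i1 i2 j hi (mem_filter.mp h1).1 (mem_filter.mp h2).1
    have := F.one_le_entry _ (mem_filter.mp h1).1
    omega
  lattice c hc v hv := by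
    have hshift : ∀ w (P : ℕ × ℕ → Prop) [DecidablePred P],
        #{c' ∈ {c ∈ F.cells | F.entry c ≠ 1} | F.entry c' - 1 = w + 1 ∧ P c'} =
          #{c' ∈ F.cells | F.entry c' = w + 2 ∧ P c'} := by
      intro w P _
      rw [filter_filter]
      refine congrArg card (filter_congr fun c' hc' => ?_)
      have := F.one_le_entry c' hc'
      constructor
      · rintro ⟨-, h, hP⟩; exact ⟨by omega, hP⟩
      · rintro ⟨h, hP⟩; exact ⟨by omega, by omega, hP⟩
    rw [hshift, hshift]
    exact F.lattice c (mem_filter.mp hc).1 (v + 1) (by omega)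

theorem count_eraseOnes (w : ℕ) : F.eraseOnes.count (w + 1) = F.count (w + 2) := by
  dsimp only [count, eraseOnes]
  rw [filter_filter]
  refine congrArg card (filter_congr fun c hc => ?_)
  have := F.one_le_entry c hc
  constructor
  · rintro ⟨-, h⟩; omega
  · intro h; exact ⟨by omega, by omega⟩

theorem overlap_one (i : ℕ) : F.overlap 1 i = #{c ∈ F.cells | c.1 = i} := by
  refine card_bij' (fun j _ => (i, j)) (fun c _ => c.2) ?_ ?_ (fun _ _ => rfl) ?_
  · intro j hj
    simpa using (mem_filter.mp hj).2 0 one_pos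
  · intro c hc
    obtain ⟨hcF, rfl⟩ := mem_filter.mp hc
    refine mem_filter.mpr ⟨mem_image_of_mem _ hcF, fun t ht => ?_⟩
    simpa [Nat.lt_one_iff.mp ht] using hcF
  · intro c hc
    rw [← (mem_filter.mp hc).2]

/-- Column strictness: below the top box of a column all entries are `≥ 2`. -/
theorem overlap_add_two_le (k i : ℕ) :
    F.overlap (k + 2) i ≤ F.eraseOnes.overlap (k + 1) (i + 1) := by
  refine card_le_card fun j hj => ?_
  obtain ⟨-, hcol⟩ := mem_filter.mp hj
  have htop : (i, j) ∈ F.cells := by simpa using hcol 0 (by omega)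
  have hbelow : ∀ t < k + 1, (i + 1 + t, j) ∈ F.eraseOnes.cells := by
    intro t ht
    have hmem : (i + 1 + t, j) ∈ F.cells := by
      rw [add_assoc, add_comm 1 t]; exact hcol (t + 1) (by omega)
    have := F.col_strict i (i + 1 + t) j (by omega) htop hmem
    have := F.one_le_entry _ htop
    exact mem_filter.mpr ⟨hmem, by omega⟩
  exact mem_filter.mpr ⟨mem_image_of_mem _ (hbelow 0 (by omega)), hbelow⟩

theorem card_rows_le (R : Finset ℕ) :
    #{c ∈ F.cells | c.1 ∈ R} ≤ ∑ v ∈ range #R, F.count (v + 1) := by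
  induction R using Finset.induction_on_min generalizing F with
  | empty => simp
  | insert a s ha ih =>
    have has : a ∉ s := fun h => lt_irrefl a (ha a h)
    have hcover : {c ∈ F.cells | c.1 ∈ insert a s} ⊆
        ({c ∈ F.cells | c.1 ∈ insert a s ∧ F.entry c = 1} ∪
          {c ∈ F.cells | c.1 = a ∧ 2 ≤ F.entry c}) ∪
            {c ∈ F.eraseOnes.cells | c.1 ∈ s} := by
      intro c hc
      obtain ⟨hc, hrow⟩ := mem_filter.mp hc
      have := F.one_le_entry c hc
      simp only [eraseOnes, mem_union, mem_filter, mem_insert] at hrow ⊢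
      rcases eq_or_ne (F.entry c) 1 with he | he
      · exact Or.inl (Or.inl ⟨hc, hrow, he⟩)
      · rcases hrow with h | h
        · exact Or.inl (Or.inr ⟨hc, h, by omega⟩)
        · exact Or.inr ⟨⟨hc, he⟩, h⟩
    have hones : #{c ∈ F.cells | c.1 ∈ insert a s ∧ F.entry c = 1} +
        #{c ∈ F.cells | c.1 = a ∧ 2 ≤ F.entry c} ≤ F.count 1 := by
      have hdisj : Disjoint {c ∈ F.cells | c.1 ∈ insert a s ∧ F.entry c = 1}
          {c ∈ F.cells | c.1 < a ∧ F.entry c = 1} := by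
        refine disjoint_filter.mpr fun c _ h1 h2 => ?_
        rcases mem_insert.mp h1.1 with h | h
        · omega
        · exact lt_asymm h2.1 (ha _ h)
      have hsub : {c ∈ F.cells | c.1 ∈ insert a s ∧ F.entry c = 1} ∪
          {c ∈ F.cells | c.1 < a ∧ F.entry c = 1} ⊆ {c ∈ F.cells | F.entry c = 1} := by
        intro c hc
        simp only [mem_union, mem_filter] at hc ⊢
        rcases hc with h | h <;> exact ⟨h.1, h.2.2⟩
      have := F.card_row_two_le_entry_le a
      have := card_union_of_disjoint hdisj ▸ card_le_card hsub
      unfold count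
      omega
    have hrest :
        #{c ∈ F.eraseOnes.cells | c.1 ∈ s} ≤ ∑ v ∈ range #s, F.count (v + 1 + 1) :=
      (ih F.eraseOnes).trans_eq (sum_congr rfl fun v _ => F.count_eraseOnes v)
    have := (card_le_card hcover).trans
      ((card_union_le _ _).trans (add_le_add_left (card_union_le _ _) _))
    rw [card_insert_of_notMem has, sum_range_succ', zero_add]
    omega

theorem sum_overlap_le (k : ℕ) (R : Finset ℕ) :
    ∑ i ∈ R, F.overlap (k + 1) i ≤ ∑ v ∈ range #R, F.count (k + 1 + v) := by
  induction k generalizing F R with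
  | zero =>
    calc ∑ i ∈ R, F.overlap (0 + 1) i = #{c ∈ F.cells | c.1 ∈ R} := by
          rw [card_eq_sum_card_fiberwise (f := Prod.fst) (s := {c ∈ F.cells | c.1 ∈ R})
            (t := R) fun c hc => (mem_filter.mp hc).2]
          refine sum_congr rfl fun i hi => ?_
          rw [zero_add, overlap_one, filter_filter]
          refine congrArg card (filter_congr fun c _ => ?_)
          constructor
          · rintro rfl; exact ⟨hi, rfl⟩
          · exact And.right
      _ ≤ ∑ v ∈ range #R, F.count (v + 1) := F.card_rows_le R
      _ = ∑ v ∈ range #R, F.count (0 + 1 + v) := by simp only [zero_add, add_comm]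
  | succ k ih =>
    calc ∑ i ∈ R, F.overlap (k + 2) i
        ≤ ∑ i ∈ R, F.eraseOnes.overlap (k + 1) (i + 1) :=
          sum_le_sum fun i _ => F.overlap_add_two_le k i
      _ = ∑ i ∈ R.map (addRightEmbedding 1), F.eraseOnes.overlap (k + 1) i := by
          rw [sum_map]; rfl
      _ ≤ ∑ v ∈ range #R, F.eraseOnes.count (k + 1 + v) := by
          simpa only [card_map] using ih F.eraseOnes (R.map (addRightEmbedding 1))
      _ = ∑ v ∈ range #R, F.count (k + 1 + 1 + v) := by
          refine sum_congr rfl fun v _ => ?_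
          rw [add_right_comm, F.count_eraseOnes, add_right_comm]

end LRFilling

namespace SkewShape

variable (A : SkewShape)

theorem mem_cells_iff {c : ℕ × ℕ} : c ∈ A.cells ↔ c ∈ A.outer ∧ c ∉ A.inner := by
  rw [cells, mem_sdiff, YoungDiagram.mem_cells, YoungDiagram.mem_cells]

theorem rowLen_le_numCols (i : ℕ) : A.outer.rowLen i ≤ A.numCols :=
  A.outer.rowLen_anti 0 i (Nat.zero_le _)

theorem row_lt_numRows {i j : ℕ} (h : (i, j) ∈ A.cells) : i < A.numRows :=
  YoungDiagram.mem_iff_lt_colLen.mp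
    (A.outer.up_left_mem le_rfl (Nat.zero_le j) ((A.mem_cells_iff.mp h).1))

theorem col_lt_numCols {i j : ℕ} (h : (i, j) ∈ A.cells) : j < A.numCols :=
  YoungDiagram.mem_iff_lt_rowLen.mp
    (A.outer.up_left_mem (Nat.zero_le i) le_rfl ((A.mem_cells_iff.mp h).1))

theorem rowsK_pairwise (k : ℕ) : (A.rowsK k).Pairwise (· ≥ ·) := sortDesc_pairwise _

theorem le_numCols_of_mem_rowsK {k x : ℕ} (hx : x ∈ A.rowsK k) : x ≤ A.numCols := by
  obtain ⟨i, -, rfl⟩ :=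
    List.mem_map.mp (List.mem_of_mem_filter ((sortDesc_perm _).mem_iff.mp hx))
  exact (card_le_card (filter_subset _ _)).trans (card_range _).le

end SkewShape

namespace SkewSsyt

variable {A : SkewShape}

def toLRFilling (T : SkewSsyt A) (hT : IsLR T) : LRFilling where
  cells := A.cells
  entry c := T.entry c.1 c.2
  one_le_entry c hc := T.pos c.1 c.2 hc
  row_weak := T.row_weak
  col_strict := T.col_strict
  lattice := hT

theorem overlap_eq_toLRFilling_overlap (T : SkewSsyt A) (hT : IsLR T) (k i : ℕ) :
    A.overlap (k + 1) i = (T.toLRFilling hT).overlap (k + 1) i := by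
  change _ = #{j ∈ A.cells.image Prod.snd | ∀ t < k + 1, (i + t, j) ∈ A.cells}
  refine congrArg card (ext fun j => ?_)
  simp only [mem_filter, mem_range, mem_image]
  constructor
  · rintro ⟨-, h⟩
    exact ⟨⟨_, h 0 (by omega), rfl⟩, h⟩
  · rintro ⟨-, h⟩
    exact ⟨A.col_lt_numCols (h 0 (by omega)), h⟩

theorem pairwise_ge_of_hasContent {T : SkewSsyt A} (hT : IsLR T) {ν : List ℕ}
    (hν : HasContent T ν) : ν.Pairwise (· ≥ ·) :=
  List.pairwise_ge_of_getD_succ_le fun v => by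
    rw [← hν, ← hν]
    exact (T.toLRFilling hT).count_add_two_le v

end SkewSsyt

theorem SkewShape.sum_take_rowsK_le (A : SkewShape) {T : SkewSsyt A} (hT : IsLR T)
    {ν : List ℕ} (hν : HasContent T ν) (k m : ℕ) :
    ((A.rowsK (k + 1)).take m).sum ≤ ∑ t ∈ range m, ν.getD (k + t) 0 := by
  have hsub : ((A.rowsK (k + 1)).take m).Subperm
      ((List.range (A.numRows + 1 - (k + 1))).map (A.overlap (k + 1))) :=
    ((List.take_sublist m _).subperm.trans (sortDesc_perm _).subperm).trans
      List.filter_sublist.subperm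
  obtain ⟨R, hR, hsum⟩ := List.exists_finset_of_subperm_map_range hsub
  calc ((A.rowsK (k + 1)).take m).sum
      = ∑ i ∈ R, (T.toLRFilling hT).overlap (k + 1) i :=
        hsum.trans (sum_congr rfl fun i _ => T.overlap_eq_toLRFilling_overlap hT k i)
    _ ≤ ∑ v ∈ range #R, (T.toLRFilling hT).count (k + 1 + v) := LRFilling.sum_overlap_le _ k R
    _ = ∑ v ∈ range #R, ν.getD (k + v) 0 :=
        sum_congr rfl fun v _ => by rw [add_right_comm]; exact hν (k + v)
    _ ≤ ∑ t ∈ range m, ν.getD (k + t) 0 :=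
        sum_le_sum_of_subset (range_subset_range.mpr (hR ▸ List.length_take_le _ _))

namespace SkewShape

variable (A : SkewShape)

/-- `A.inner` enlarged by the top box of every column of `A`. -/
def trimInner : YoungDiagram where
  cells := {c ∈ A.outer.cells | c.1 = 0 ∨ (c.1 - 1, c.2) ∈ A.inner}
  isLowerSet := by
    rintro ⟨i, j⟩ ⟨i', j'⟩ hle hc
    obtain ⟨hi, hj⟩ := Prod.mk_le_mk.mp hle
    simp only [coe_filter, YoungDiagram.mem_cells, Set.mem_ofPred_eq] at hc ⊢
    refine ⟨A.outer.up_left_mem hi hj hc.1, ?_⟩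
    rcases Nat.eq_zero_or_pos i' with h | h
    · exact Or.inl h
    · exact Or.inr (A.inner.up_left_mem (by omega) hj (hc.2.resolve_left (by omega)))

def trim : SkewShape := ⟨A.outer, A.trimInner, fun _ hc => (mem_filter.mp hc).1⟩

theorem trim_cells : A.trim.cells = trimCells A := by
  ext ⟨i, j⟩
  simp only [trim, cells, trimInner, trimCells, mem_sdiff, mem_filter, YoungDiagram.mem_cells]
  constructor
  · rintro ⟨hout, hnot⟩
    push Not at hnot
    obtain ⟨hi, hup⟩ := hnot hout
    have hin : (i, j) ∉ A.inner := fun h => hup (A.inner.up_left_mem (by omega) le_rfl h)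
    exact ⟨⟨hout, hin⟩, by omega, A.outer.up_left_mem (by omega) le_rfl hout, hup⟩
  · rintro ⟨⟨hout, -⟩, hi, -, hup⟩
    exact ⟨hout, fun h => h.2.elim (by omega) hup⟩

theorem mem_trim_cells {c : ℕ × ℕ} :
    c ∈ A.trim.cells ↔ c ∈ A.cells ∧ 1 ≤ c.1 ∧ (c.1 - 1, c.2) ∈ A.cells := by
  rw [trim_cells, trimCells, mem_filter]

theorem overlap_add_two (k i : ℕ) : A.overlap (k + 2) i = A.trim.overlap (k + 1) (i + 1) := by
  refine congrArg card (filter_congr fun j _ => ?_)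
  simp only [mem_trim_cells]
  constructor
  · intro h t ht
    refine ⟨?_, by omega, ?_⟩
    · simpa [add_assoc, add_comm 1 t] using h (t + 1) (by omega)
    · simpa using h t (by omega)
  · intro h t ht
    rcases t with _ | t
    · simpa using (h 0 (by omega)).2.2
    · simpa [add_assoc, add_comm 1 t] using (h t (by omega)).1

theorem trim_overlap_zero (k : ℕ) : A.trim.overlap (k + 1) 0 = 0 :=
  card_eq_zero.mpr <| filter_eq_empty_iff.mpr fun _ _ h =>
    absurd (A.mem_trim_cells.mp (h 0 (by omega))).2.1 (by simp)

theorem rowsK_add_two (k : ℕ) : A.rowsK (k + 2) = A.trim.rowsK (k + 1) := by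
  unfold rowsK
  congr 1
  change _ = List.filter _ (List.map _ (List.range (A.numRows + 1 - (k + 1))))
  cases hn : A.numRows + 1 - (k + 1) with
  | zero =>
    rw [show A.numRows + 1 - (k + 2) = 0 by omega]
    rfl
  | succ n =>
    rw [List.range_succ_eq_map, List.map_cons, List.filter_cons, trim_overlap_zero,
      show A.numRows + 1 - (k + 2) = n by omega, List.map_map]
    simp only [lt_self_iff_false, decide_false, Bool.false_eq_true, if_false]
    exact congrArg _ (List.map_congr_left fun i _ => A.overlap_add_two k i)

theorem mem_trim_cells_of_left {i j1 j2 : ℕ} (hj : j1 < j2) (h1 : (i, j1) ∈ A.trim.cells)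
    (h2 : (i, j2) ∈ A.cells) : (i, j2) ∈ A.trim.cells := by
  obtain ⟨-, hi, hup⟩ := A.mem_trim_cells.mp h1
  refine A.mem_trim_cells.mpr ⟨h2, hi, A.mem_cells_iff.mpr ⟨?_, fun hin => ?_⟩⟩
  · exact A.outer.up_left_mem (by omega) le_rfl (A.mem_cells_iff.mp h2).1
  · exact (A.mem_cells_iff.mp hup).2 (A.inner.up_left_mem le_rfl hj.le hin)

theorem mem_trim_cells_of_above {i1 i2 j : ℕ} (hi : i1 < i2) (h1 : (i1, j) ∈ A.cells)
    (h2 : (i2, j) ∈ A.cells) : (i2, j) ∈ A.trim.cells := by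
  rw [mem_cells_iff_colLen] at h1 h2
  refine A.mem_trim_cells.mpr ⟨A.mem_cells_iff_colLen.mpr h2, by omega, ?_⟩
  rw [mem_cells_iff_colLen]
  dsimp only
  omega

def rowLength (i : ℕ) : ℕ := A.outer.rowLen i - A.inner.rowLen i

/-- The position of a box counted from the right end of its row, starting at `1`. -/
def offset (c : ℕ × ℕ) : ℕ := A.outer.rowLen c.1 - c.2

def numLongRowsAbove (i t : ℕ) : ℕ := #{i' ∈ range i | t ≤ A.rowLength i'}

theorem numLongRowsAbove_succ (i t : ℕ) : A.numLongRowsAbove (i + 1) t =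
    A.numLongRowsAbove i t + if t ≤ A.rowLength i then 1 else 0 := by
  rw [numLongRowsAbove, range_add_one, filter_insert]
  split_ifs
  · exact card_insert_of_notMem (by simp)
  · rfl

theorem inner_rowLen_le (i : ℕ) : A.inner.rowLen i ≤ A.outer.rowLen i := by
  by_contra! h
  have hin : (i, A.outer.rowLen i) ∈ A.inner.cells :=
    (YoungDiagram.mem_cells _).mpr (YoungDiagram.mem_iff_lt_rowLen.mpr h)
  exact lt_irrefl _ (YoungDiagram.mem_iff_lt_rowLen.mp ((YoungDiagram.mem_cells _).mp (A.le hin)))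

theorem offset_mem_Icc {c : ℕ × ℕ} (h : c ∈ A.cells) :
    A.offset c ∈ Set.Icc 1 (A.rowLength c.1) := by
  have := (A.mem_cells_iff_rowLen (i := c.1) (j := c.2)).mp h
  rw [Set.mem_Icc, offset, rowLength]
  omega

theorem mem_cells_of_offset {i t : ℕ} (h1 : 1 ≤ t) (h2 : t ≤ A.rowLength i) :
    (i, A.outer.rowLen i - t) ∈ A.cells ∧ A.offset (i, A.outer.rowLen i - t) = t := by
  have := A.inner_rowLen_le i
  unfold rowLength at h2
  rw [mem_cells_iff_rowLen, offset]
  dsimp only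
  omega

theorem numLongRowsAbove_anti (i : ℕ) : Antitone (A.numLongRowsAbove i) :=
  fun _ _ ht => card_le_card (monotone_filter_right _ fun _ _ h => ht.trans h)

theorem numLongRowsAbove_lt {i1 i2 t1 t2 : ℕ} (hi : i1 < i2) (ht : t2 ≤ t1)
    (h1 : t1 ≤ A.rowLength i1) : A.numLongRowsAbove i1 t1 < A.numLongRowsAbove i2 t2 := by
  refine card_lt_card ⟨fun i' hi' => ?_, fun hsub => ?_⟩
  · simp only [mem_filter, mem_range] at hi' ⊢
    omega
  · simpa using hsub (mem_filter.mpr ⟨mem_range.mpr hi, ht.trans h1⟩)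

theorem exists_numLongRowsAbove_eq {i t v : ℕ} (h : v < A.numLongRowsAbove i t) :
    ∃ i' < i, t ≤ A.rowLength i' ∧ A.numLongRowsAbove i' t = v := by
  induction i with
  | zero => simp [numLongRowsAbove] at h
  | succ i ih =>
    rw [numLongRowsAbove_succ] at h
    by_cases hv : v < A.numLongRowsAbove i t
    · obtain ⟨i', hi', h'⟩ := ih hv
      exact ⟨i', by omega, h'⟩
    · by_cases hlong : t ≤ A.rowLength i
      · rw [if_pos hlong] at h
        exact ⟨i, by omega, hlong, by omega⟩
      · rw [if_neg hlong] at h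
        omega

/-- Right-justify the rows of `A`; the box in the `t`-th column from the right of row `i`
gets `1` plus the number of earlier rows reaching that column. -/
def canonical : SkewSsyt A where
  entry i j := if (i, j) ∈ A.cells then A.numLongRowsAbove i (A.offset (i, j)) + 1 else 0
  pos i j h := by simp [h]
  zeros i j h := by simp [h]
  row_weak i j1 j2 hj h1 h2 := by
    simp only [h1, h2, if_true, add_le_add_iff_right]
    exact A.numLongRowsAbove_anti i (by simp only [offset]; omega)
  col_strict i1 i2 j hi h1 h2 := by
    simp only [h1, h2, if_true, add_lt_add_iff_right]
    have := A.outer.rowLen_anti i1 i2 hi.le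
    exact A.numLongRowsAbove_lt hi (by simp only [offset]; omega) (A.offset_mem_Icc h1).2

theorem canonical_entry {c : ℕ × ℕ} (h : c ∈ A.cells) :
    A.canonical.entry c.1 c.2 = A.numLongRowsAbove c.1 (A.offset c) + 1 :=
  if_pos h

theorem eq_of_offset_eq {c c' : ℕ × ℕ} (hc : c ∈ A.cells) (hc' : c' ∈ A.cells)
    (ht : A.offset c = A.offset c')
    (hN : A.numLongRowsAbove c.1 (A.offset c) = A.numLongRowsAbove c'.1 (A.offset c')) :
    c = c' := by
  have hrow : c.1 = c'.1 := by
    rcases lt_trichotomy c.1 c'.1 with hlt | heq | hlt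
    · exact absurd hN (A.numLongRowsAbove_lt hlt ht.ge (A.offset_mem_Icc hc).2).ne
    · exact heq
    · exact absurd hN (A.numLongRowsAbove_lt hlt ht.le (A.offset_mem_Icc hc').2).ne'
  obtain ⟨i, j⟩ := c
  obtain ⟨i', j'⟩ := c'
  dsimp only at hrow
  subst hrow
  have := (A.mem_cells_iff_rowLen).mp hc
  have := (A.mem_cells_iff_rowLen).mp hc'
  simp only [offset] at ht
  rw [Prod.mk.injEq]
  omega

theorem canonical_isLR : IsLR A.canonical := by
  intro c hc v hv
  rw [A.canonical_entry hc] at hv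
  set S := {c' ∈ A.cells | A.canonical.entry c'.1 c'.2 = v + 2 ∧ (readBefore c' c ∨ c' = c)}
  set S' := {c' ∈ A.cells | A.canonical.entry c'.1 c'.2 = v + 1 ∧ readBefore c' c}
  have hinj : Set.InjOn A.offset S := by
    intro b hb b' hb' h
    obtain ⟨hb, hbe, -⟩ := mem_filter.mp hb
    obtain ⟨hb', hbe', -⟩ := mem_filter.mp hb'
    rw [A.canonical_entry hb] at hbe
    rw [A.canonical_entry hb'] at hbe'
    exact A.eq_of_offset_eq hb hb' h (by omega)
  -- the box with entry `v + 2` sits below the box with entry `v + 1` of the same offset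
  have hsub : S.image A.offset ⊆ S'.image A.offset := by
    intro t ht
    obtain ⟨b, hb, rfl⟩ := mem_image.mp ht
    obtain ⟨hb, hbe, hbc⟩ := mem_filter.mp hb
    rw [A.canonical_entry hb] at hbe
    obtain ⟨i', hi', hlong, hN⟩ :=
      A.exists_numLongRowsAbove_eq (show v < A.numLongRowsAbove b.1 (A.offset b) by omega)
    obtain ⟨hmem, hoff⟩ := A.mem_cells_of_offset (A.offset_mem_Icc hb).1 hlong
    refine mem_image.mpr ⟨_, mem_filter.mpr ⟨hmem, ?_, Or.inl ?_⟩, hoff⟩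
    · rw [A.canonical_entry hmem, hoff, hN]
    · have : b.1 ≤ c.1 := by rcases hbc with (h | ⟨h, -⟩) | rfl <;> omega
      dsimp only
      omega
  calc #S = #(S.image A.offset) := (card_image_of_injOn hinj).symm
    _ ≤ #(S'.image A.offset) := card_le_card hsub
    _ ≤ #S' := card_image_le

theorem overlap_one (i : ℕ) : A.overlap 1 i = A.rowLength i := by
  rw [rowLength, ← Nat.card_Ico]
  refine congrArg card (ext fun j => ?_)
  simp only [mem_filter, mem_range, mem_Ico, Nat.lt_one_iff, forall_eq, add_zero,
    mem_cells_iff_rowLen]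
  have := A.rowLen_le_numCols i
  omega

theorem countP_rowsK_one (t : ℕ) :
    (A.rowsK 1).countP (fun x => t + 1 ≤ x) = A.numLongRowsAbove A.numRows (t + 1) := by
  rw [rowsK, (sortDesc_perm _).countP_eq, List.countP_filter, List.countP_map,
    Nat.add_sub_cancel, numLongRowsAbove, ← Nat.count_eq_card_filter_range, Nat.count]
  refine List.countP_congr fun i _ => ?_
  simp only [Function.comp_apply, overlap_one, Bool.and_eq_true, decide_eq_true_eq]
  omega

theorem canonical_hasContent : HasContent A.canonical (A.rowsK 1) := by
  intro v
  rw [List.getD_eq_card_lt_countP (A.rowsK_pairwise 1) fun x hx => A.le_numCols_of_mem_rowsK hx]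
  simp only [countP_rowsK_one]
  set S := {c ∈ A.cells | A.canonical.entry c.1 c.2 = v + 1}
  have hentry : ∀ c ∈ S, c ∈ A.cells ∧ A.numLongRowsAbove c.1 (A.offset c) = v := by
    intro c hc
    obtain ⟨hc, he⟩ := mem_filter.mp hc
    rw [A.canonical_entry hc] at he
    exact ⟨hc, by omega⟩
  have hinj : Set.InjOn (fun c => A.offset c - 1) S := by
    intro c hc c' hc' h
    obtain ⟨hc, hN⟩ := hentry c hc
    obtain ⟨hc', hN'⟩ := hentry c' hc'
    obtain ⟨h1, -⟩ := A.offset_mem_Icc hc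
    obtain ⟨h1', -⟩ := A.offset_mem_Icc hc'
    exact A.eq_of_offset_eq hc hc' (by dsimp only at h; omega) (hN.trans hN'.symm)
  rw [contentCount, ← card_image_of_injOn hinj]
  refine congrArg card (ext fun t => ⟨fun ht => ?_, fun ht => ?_⟩)
  · obtain ⟨c, hc, rfl⟩ := mem_image.mp ht
    obtain ⟨hc, hN⟩ := hentry c hc
    obtain ⟨h1, h2⟩ := A.offset_mem_Icc hc
    have hlt := A.numLongRowsAbove_lt (A.row_lt_numRows hc) (le_refl _) h2
    have := A.rowLen_le_numCols c.1
    refine mem_filter.mpr ⟨mem_range.mpr ?_, ?_⟩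
    · unfold offset at h1 ⊢; omega
    · rw [Nat.sub_add_cancel h1]; omega
  · obtain ⟨ht, hv⟩ := mem_filter.mp ht
    obtain ⟨i, -, hlong, hN⟩ := A.exists_numLongRowsAbove_eq hv
    obtain ⟨hmem, hoff⟩ := A.mem_cells_of_offset (Nat.le_add_left 1 t) hlong
    refine mem_image.mpr ⟨_, mem_filter.mpr ⟨hmem, ?_⟩, ?_⟩
    · rw [A.canonical_entry hmem, hoff, hN]
    · simp only [hoff, Nat.add_sub_cancel]

end SkewShape

namespace SkewSsyt

variable {A : SkewShape} (T : SkewSsyt A.trim)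

/-- `T` raised by one, with `1` in the top box of every column of `A`. -/
def untrim : SkewSsyt A where
  entry i j :=
    if (i, j) ∈ A.trim.cells then T.entry i j + 1 else if (i, j) ∈ A.cells then 1 else 0
  pos i j h := by split_ifs <;> omega
  zeros i j h := by
    have : (i, j) ∉ A.trim.cells := fun h' => h (A.mem_trim_cells.mp h').1
    simp [h, this]
  row_weak i j1 j2 hj h1 h2 := by
    by_cases ht1 : (i, j1) ∈ A.trim.cells
    · have ht2 : (i, j2) ∈ A.trim.cells := by
        rcases hj.lt_or_eq with hlt | rfl
        · exact A.mem_trim_cells_of_left hlt ht1 h2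
        · exact ht1
      simp only [ht1, ht2, if_true, add_le_add_iff_right]
      exact T.row_weak i j1 j2 hj ht1 ht2
    · simp only [ht1, h1, if_true, if_false]
      split_ifs <;> omega
  col_strict i1 i2 j hi h1 h2 := by
    have ht2 := A.mem_trim_cells_of_above hi h1 h2
    by_cases ht1 : (i1, j) ∈ A.trim.cells
    · simp only [ht1, ht2, if_true, add_lt_add_iff_right]
      exact T.col_strict i1 i2 j hi ht1 ht2
    · simp only [ht1, ht2, h1, if_true, if_false]
      have := T.pos i2 j ht2
      omega

theorem untrim_entry_of_mem_trim {c : ℕ × ℕ} (h : c ∈ A.trim.cells) :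
    T.untrim.entry c.1 c.2 = T.entry c.1 c.2 + 1 :=
  if_pos h

theorem untrim_entry_of_not_mem_trim {c : ℕ × ℕ} (h : c ∈ A.cells)
    (h' : c ∉ A.trim.cells) : T.untrim.entry c.1 c.2 = 1 := by
  simp only [untrim, h, h', if_true, if_false]

theorem untrim_entry_eq_add_two_iff {c : ℕ × ℕ} (h : c ∈ A.cells) (w : ℕ) :
    T.untrim.entry c.1 c.2 = w + 2 ↔ c ∈ A.trim.cells ∧ T.entry c.1 c.2 = w + 1 := by
  by_cases ht : c ∈ A.trim.cells
  · rw [T.untrim_entry_of_mem_trim ht]; simp [ht]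
  · rw [T.untrim_entry_of_not_mem_trim h ht]; simp [ht]

theorem filter_untrim_entry_eq_add_two (w : ℕ) (P : ℕ × ℕ → Prop) [DecidablePred P] :
    {c ∈ A.cells | T.untrim.entry c.1 c.2 = w + 2 ∧ P c} =
      {c ∈ A.trim.cells | T.entry c.1 c.2 = w + 1 ∧ P c} := by
  ext c
  simp only [mem_filter]
  constructor
  · rintro ⟨hc, he, hP⟩
    obtain ⟨ht, he⟩ := (T.untrim_entry_eq_add_two_iff hc w).mp he
    exact ⟨ht, he, hP⟩
  · rintro ⟨ht, he, hP⟩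
    have hc := (A.mem_trim_cells.mp ht).1
    exact ⟨hc, (T.untrim_entry_eq_add_two_iff hc w).mpr ⟨ht, he⟩, hP⟩

theorem untrim_isLR (hT : IsLR T) : IsLR T.untrim := by
  intro c hc v hv
  rcases v with _ | v
  · -- each `2` is matched with the `1` directly above it
    refine card_le_card_of_injOn (fun b => (b.1 - 1, b.2)) (fun b hb => ?_)
      (fun b hb b' hb' h => ?_)
    · obtain ⟨hb, hbe, hbc⟩ := mem_filter.mp hb
      obtain ⟨hbt, hbe⟩ := (T.untrim_entry_eq_add_two_iff hb 0).mp hbe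
      obtain ⟨-, hb1, hup⟩ := A.mem_trim_cells.mp hbt
      have hupt : (b.1 - 1, b.2) ∉ A.trim.cells := fun hupt => by
        have := T.col_strict (b.1 - 1) b.1 b.2 (by omega) hupt hbt
        have := T.pos _ _ hupt
        omega
      have : b.1 ≤ c.1 := by rcases hbc with (h | ⟨h, -⟩) | rfl <;> omega
      refine mem_filter.mpr ⟨hup, T.untrim_entry_of_not_mem_trim hup hupt, Or.inl ?_⟩
      dsimp only
      omega
    · obtain ⟨hb, hbe, -⟩ := mem_filter.mp hb
      obtain ⟨hb', hbe', -⟩ := mem_filter.mp hb'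
      have := (A.mem_trim_cells.mp ((T.untrim_entry_eq_add_two_iff hb 0).mp hbe).1).2.1
      have := (A.mem_trim_cells.mp ((T.untrim_entry_eq_add_two_iff hb' 0).mp hbe').1).2.1
      simp only [Prod.mk.injEq] at h
      exact Prod.ext (by omega) h.2
  · obtain ⟨hct, hce⟩ := (T.untrim_entry_eq_add_two_iff hc (v + 1)).mp hv
    rw [T.filter_untrim_entry_eq_add_two, T.filter_untrim_entry_eq_add_two]
    exact hT c hct v hce

theorem contentCount_untrim (w : ℕ) :
    contentCount T.untrim (w + 2) = contentCount T (w + 1) := by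
  unfold contentCount
  simpa using congrArg card (T.filter_untrim_entry_eq_add_two w fun _ => True)

theorem untrim_hasContent {ν : List ℕ} (hν : HasContent T ν) :
    HasContent T.untrim (contentCount T.untrim 1 :: ν) := by
  rintro (_ | v)
  · rfl
  · exact (T.contentCount_untrim v).trans (hν v)

end SkewSsyt

theorem SkewShape.exists_lr_content_getD_eq_rowsK (k : ℕ) (B : SkewShape) :
    ∃ (ν : List ℕ) (T : SkewSsyt B), IsLR T ∧ HasContent T ν ∧
      ∀ t, ν.getD (k + t) 0 = (B.rowsK (k + 1)).getD t 0 := by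
  induction k generalizing B with
  | zero => exact ⟨B.rowsK 1, B.canonical, B.canonical_isLR, B.canonical_hasContent, by simp⟩
  | succ k ih =>
    obtain ⟨ν, T, hT, hν, htail⟩ := ih B.trim
    refine ⟨_, T.untrim, T.untrim_isLR hT, T.untrim_hasContent hν, fun t => ?_⟩
    rw [add_right_comm, List.getD_cons_succ, htail, B.rowsK_add_two]

namespace SkewSsyt

variable {A : SkewShape}

theorem ext_entry {T T' : SkewSsyt A} (h : ∀ i j, T.entry i j = T'.entry i j) : T = T' := by
  cases T
  cases T'
  congr
  funext i j
  exact h i j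

theorem entry_le_length_of_hasContent {T : SkewSsyt A} {ν : List ℕ} (hν : HasContent T ν)
    {i j : ℕ} (h : (i, j) ∈ A.cells) : T.entry i j ≤ ν.length := by
  by_contra! hlong
  have hpos : 0 < contentCount T (T.entry i j) :=
    card_pos.mpr ⟨(i, j), mem_filter.mpr ⟨h, rfl⟩⟩
  rw [← Nat.sub_add_cancel (T.pos i j h), hν, List.getD_eq_default _ _ (by omega)] at hpos
  exact lt_irrefl 0 hpos

end SkewSsyt

theorem finite_lrFillings (A : SkewShape) (ν : List ℕ) :
    Finite {T : SkewSsyt A // IsLR T ∧ HasContent T ν} := by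
  refine Finite.of_injective (β := A.cells → Fin (ν.length + 1))
    (fun T c => ⟨T.1.entry c.1.1 c.1.2,
      Nat.lt_succ_of_le (SkewSsyt.entry_le_length_of_hasContent T.2.2 c.2)⟩)
    fun T T' h => Subtype.ext (SkewSsyt.ext_entry fun i j => ?_)
  by_cases hc : (i, j) ∈ A.cells
  · simpa using congrFun h ⟨(i, j), hc⟩
  · rw [T.1.zeros i j hc, T'.1.zeros i j hc]

theorem lrCoeff_pos_iff {A : SkewShape} {ν : List ℕ} :
    0 < lrCoeff A ν ↔ ∃ T : SkewSsyt A, IsLR T ∧ HasContent T ν := by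
  rw [lrCoeff, Nat.card_pos_iff, and_iff_left (finite_lrFillings A ν), nonempty_subtype]

/-- Corollary `cor:Schurpositivity`.
Let `A` and `B` be skew shapes.  If the difference `s_A − s_B` of their skew Schur
functions is Schur-positive, then `rows_k(A) ⊴ rows_k(B)` in the dominance order for
all `k ≥ 1`. -/
theorem rowsK_dom_of_schurPositiveDiff (A B : SkewShape) (h : SchurPositiveDiff A B) :
    ∀ k, 1 ≤ k → Dom (A.rowsK k) (B.rowsK k) := by
  intro k hk m
  obtain ⟨k, rfl⟩ := Nat.exists_eq_add_of_le' hk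
  obtain ⟨ν, TB, hTB, hνB, htail⟩ := B.exists_lr_content_getD_eq_rowsK k
  have hpos : 0 < lrCoeff A ν := (lrCoeff_pos_iff.mpr ⟨TB, hTB, hνB⟩).trans_le
    (h ν (SkewSsyt.pairwise_ge_of_hasContent hTB hνB))
  obtain ⟨TA, hTA, hνA⟩ := lrCoeff_pos_iff.mp hpos
  calc ((A.rowsK (k + 1)).take m).sum
      ≤ ∑ t ∈ range m, ν.getD (k + t) 0 := A.sum_take_rowsK_le hTA hνA k m
    _ = ((B.rowsK (k + 1)).take m).sum := by
        simp only [htail, List.sum_take_eq_sum_range_getD]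
end
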